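/- arXiv:2510.02795 — 9 statements merged into one kernel-verified Lean document; each statement's English description precedes it below -/
import Mathlib

section
/- Let C = (L_1, L_2, ...) be a countable collection of languages and run Procedure 1 on it. For every i ≥ 1, when C(L_i) and m*(L_i) are determined at the end of iteration i, the subcollection C(L_i) is either empty, or it contains at least one language L_j ≠ L_i with j < i; furthermore, every language L_j ≠ L_i belonging to C(L_i) satisfies m*(L_j) < m*(L_i). -/
/-- A valid subcollection for the check in Procedure 1: a finite set `s` of language
indices drawn from the prefix `pre` (or equal to `last`), which contains `last`, and
whose intersection `⋂ k ∈ s, L k` is finite. -/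
def ValidSub (L : ℕ → Set ℕ) (pre : List ℕ) (last : ℕ) (s : Finset ℕ) : Prop :=
  last ∈ s ∧ (∀ k ∈ s, k = last ∨ k ∈ pre) ∧ (⋂ k ∈ s, L k).Finite

/-- `m` is the value `m_chk` computed in the while loop of Procedure 1 for the prefix
`pre` followed by the language `last`: the largest size of a finite intersection of a
subcollection containing `last` (and `0` if no such subcollection exists). -/
def IsMchk (L : ℕ → Set ℕ) (pre : List ℕ) (last : ℕ) (m : ℕ) : Prop :=
  ((¬ ∃ s, ValidSub L pre last s) ∧ m = 0) ∨
    ((∃ s, ValidSub L pre last s ∧ (⋂ k ∈ s, L k).ncard = m) ∧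
      ∀ s, ValidSub L pre last s → (⋂ k ∈ s, L k).ncard ≤ m)

/-- `s` is a witness subcollection `C_chk` realizing `m = m_chk` (with `s = ∅`, `m = 0`
if no valid subcollection exists). -/
def WitnessAt (L : ℕ → Set ℕ) (pre : List ℕ) (last : ℕ) (s : Finset ℕ) (m : ℕ) : Prop :=
  ((¬ ∃ s', ValidSub L pre last s') ∧ s = ∅ ∧ m = 0) ∨
    (ValidSub L pre last s ∧ (⋂ k ∈ s, L k).ncard = m ∧
      ∀ s', ValidSub L pre last s' → (⋂ k ∈ s', L k).ncard ≤ m)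

/-- A run of Procedure 1 (insertion sort for non-uniform generation) on the collection
`L 0, L 1, L 2, ...` (0-based indexing: `L i` is the paper's `L_{i+1}`).
`ord i` is the ordering `C'_i` (a list of original indices, a permutation of
`0, ..., i-1`), `pos i` is the (0-based) position at which language `i` is finally
inserted during iteration `i`, `wit i` is the witness subcollection `C(L_i)` (a finite
set of original indices) and `mstar i` is the non-uniform complexity `m*(L_i)`. -/
structure Proc1Run (L : ℕ → Set ℕ) where
  ord : ℕ → List ℕ
  pos : ℕ → ℕ
  wit : ℕ → Finset ℕ
  mstar : ℕ → ℕ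
  ord_zero : ord 0 = []
  pos_le : ∀ i, pos i ≤ i
  /-- `C'_{i+1}` is obtained from `C'_i` by inserting language `i` at position `pos i`. -/
  ord_succ : ∀ i, ord (i + 1) = (ord i).take (pos i) ++ i :: (ord i).drop (pos i)
  /-- While moving language `i` forward through each intermediate position `q` with
  `pos i < q ≤ i`, the while loop did not break: the value `m_chk` computed there was
  at most `m*` of the preceding language. -/
  moved : ∀ i q, pos i < q → q ≤ i →
    ∀ m, IsMchk L ((ord i).take q) i m → m ≤ mstar ((ord i).getD (q - 1) 0)
  /-- At the final position the while loop broke: either `j ≤ 1` or `m_chk > m*` of the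
  preceding language. -/
  stopped : ∀ i, pos i = 0 ∨ mstar ((ord i).getD (pos i - 1) 0) < mstar i
  /-- `C(L_i)` and `m*(L_i)` are the witness subcollection and maximal value computed at
  the final position. -/
  wit_spec : ∀ i, WitnessAt L ((ord i).take (pos i)) i (wit i) (mstar i)

/-!
The ordering `C'_i` stays sorted by `m*`. When `L_i` is inserted at position `p`,
the languages before `p` have `m*` at most that of the language at `p - 1`, which is below
`m*(L_i)` because the loop stopped there. The languages after `p` have `m*` at least `m*(L_i)`,
because `m_chk` only grows with the prefix and the loop did not stop at their positions.
A witness language other than `L_i` lies in the final prefix, hence has smaller `m*`; and a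
nonempty witness cannot consist of copies of `L_i` alone, as its intersection would be the
infinite `L_i`.
-/

section Lists

variable {α β : Type*} [Preorder β] {f : α → β} {l : List α}

theorem List.le_getD_pred_of_mem_take (hl : l.Pairwise (fun a b => f a ≤ f b)) {p : ℕ}
    (hp : p ≤ l.length) {a : α} (ha : a ∈ l.take p) (d : α) :
    f a ≤ f (l.getD (p - 1) d) := by
  obtain ⟨k, hk, rfl⟩ := List.mem_take_iff_getElem.1 ha
  rw [List.getD_eq_getElem _ _ (by omega)]
  rcases (show k < p - 1 ∨ k = p - 1 by omega) with hlt | rfl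
  · exact List.pairwise_iff_getElem.1 hl _ _ _ _ hlt
  · exact le_rfl

theorem List.exists_getD_eq_of_mem_drop {p : ℕ} {b : α} (hb : b ∈ l.drop p) (d : α) :
    ∃ q, p ≤ q ∧ q < l.length ∧ l.getD q d = b := by
  obtain ⟨k, hk, rfl⟩ := List.mem_drop_iff_getElem.1 hb
  exact ⟨p + k, by omega, by omega, List.getD_eq_getElem _ _ _⟩

end Lists

section Check

variable {L : ℕ → Set ℕ} {pre pre' : List ℕ} {last : ℕ} {s : Finset ℕ} {m m' : ℕ}

theorem ValidSub.mono (h : ValidSub L pre last s) (hpre : pre ⊆ pre') :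
    ValidSub L pre' last s :=
  ⟨h.1, fun k hk => (h.2.1 k hk).imp_right (@hpre k), h.2.2⟩

theorem ValidSub.subset_insert_toFinset (h : ValidSub L pre last s) :
    s ⊆ insert last pre.toFinset := fun k hk => by
  simpa using h.2.1 k hk

theorem ValidSub.exists_ne (hL : (L last).Infinite) (h : ValidSub L pre last s) :
    ∃ j ∈ s, L j ≠ L last := by
  by_contra! hall
  refine hL (h.2.2.subset fun x hx => ?_)
  simp only [Set.mem_iInter]
  intro k hk
  rwa [hall k hk]

theorem exists_isMchk (L : ℕ → Set ℕ) (pre : List ℕ) (last : ℕ) : ∃ m, IsMchk L pre last m := by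
  classical
  by_cases hex : ∃ s, ValidSub L pre last s
  · obtain ⟨s₀, hs₀⟩ := hex
    obtain ⟨s, hs, hmax⟩ := ((insert last pre.toFinset).powerset.filter
      (ValidSub L pre last)).exists_max_image (fun s => (⋂ k ∈ s, L k).ncard)
        ⟨s₀, Finset.mem_filter.2 ⟨Finset.mem_powerset.2 hs₀.subset_insert_toFinset, hs₀⟩⟩
    simp only [Finset.mem_filter, Finset.mem_powerset] at hs hmax
    exact ⟨_, Or.inr ⟨⟨s, hs.2, rfl⟩, fun s' hs' => hmax s' ⟨hs'.subset_insert_toFinset, hs'⟩⟩⟩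
  · exact ⟨0, Or.inl ⟨hex, rfl⟩⟩

theorem IsMchk.mono (hpre : pre ⊆ pre') (h : IsMchk L pre last m)
    (h' : IsMchk L pre' last m') : m ≤ m' := by
  rcases h with ⟨-, rfl⟩ | ⟨⟨s, hs, rfl⟩, -⟩
  · exact Nat.zero_le _
  · rcases h' with ⟨hno, -⟩ | ⟨-, hmax⟩
    · exact absurd ⟨s, hs.mono hpre⟩ hno
    · exact hmax s (hs.mono hpre)

theorem WitnessAt.isMchk (h : WitnessAt L pre last s m) : IsMchk L pre last m := by
  rcases h with ⟨hno, -, hm⟩ | ⟨hs, hm, hmax⟩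
  · exact Or.inl ⟨hno, hm⟩
  · exact Or.inr ⟨⟨s, hs, hm⟩, hmax⟩

theorem WitnessAt.eq_empty_or_validSub (h : WitnessAt L pre last s m) :
    s = ∅ ∨ ValidSub L pre last s :=
  h.imp (fun h => h.2.1) (fun h => h.1)

end Check

namespace Proc1Run

variable {L : ℕ → Set ℕ} (R : Proc1Run L)

theorem length_ord (i : ℕ) : (R.ord i).length = i := by
  induction i with
  | zero => simp [R.ord_zero]
  | succ n ih =>
    have := R.pos_le n
    simp only [R.ord_succ, List.length_append, List.length_take, List.length_cons,
      List.length_drop, ih]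
    omega

theorem lt_of_mem_ord {i j : ℕ} (hj : j ∈ R.ord i) : j < i := by
  induction i generalizing j with
  | zero => simp [R.ord_zero] at hj
  | succ n ih =>
    rw [R.ord_succ, List.mem_append, List.mem_cons] at hj
    rcases hj with hj | rfl | hj
    · exact Nat.lt_succ_of_lt (ih (List.take_subset _ _ hj))
    · exact Nat.lt_succ_self _
    · exact Nat.lt_succ_of_lt (ih (List.drop_subset _ _ hj))

theorem mstar_lt_of_mem_take_pos {i : ℕ}
    (hsorted : (R.ord i).Pairwise (fun a b => R.mstar a ≤ R.mstar b)) {a : ℕ}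
    (ha : a ∈ (R.ord i).take (R.pos i)) : R.mstar a < R.mstar i := by
  have hpos : R.pos i ≠ 0 := by
    rintro h
    simp [h] at ha
  calc R.mstar a ≤ R.mstar ((R.ord i).getD (R.pos i - 1) 0) :=
        List.le_getD_pred_of_mem_take hsorted (by rw [R.length_ord]; exact R.pos_le i) ha 0
    _ < R.mstar i := (R.stopped i).resolve_left hpos

theorem mstar_le_of_mem_drop_pos {i b : ℕ} (hb : b ∈ (R.ord i).drop (R.pos i)) :
    R.mstar i ≤ R.mstar b := by
  obtain ⟨q, hpq, hq, rfl⟩ := List.exists_getD_eq_of_mem_drop hb 0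
  rw [R.length_ord] at hq
  obtain ⟨m, hm⟩ := exists_isMchk L ((R.ord i).take (q + 1)) i
  calc R.mstar i ≤ m :=
        (R.wit_spec i).isMchk.mono (List.take_subset_take_left _ (by omega)) hm
    _ ≤ R.mstar ((R.ord i).getD q 0) := R.moved i (q + 1) (by omega) (by omega) m hm

theorem pairwise_ord (i : ℕ) : (R.ord i).Pairwise (fun a b => R.mstar a ≤ R.mstar b) := by
  induction i with
  | zero => simp [R.ord_zero]
  | succ n ih =>
    have hsplit := List.pairwise_append.1 ((List.take_append_drop (R.pos n) (R.ord n)).symm ▸ ih)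
    rw [R.ord_succ, List.pairwise_append, List.pairwise_cons]
    refine ⟨hsplit.1, ⟨fun b hb => R.mstar_le_of_mem_drop_pos hb, hsplit.2.1⟩, ?_⟩
    intro a ha b hb
    rcases List.mem_cons.1 hb with rfl | hb
    · exact (R.mstar_lt_of_mem_take_pos ih ha).le
    · exact hsplit.2.2 a ha b hb

theorem mem_take_pos_of_mem_wit {i j : ℕ} (hj : j ∈ R.wit i) (hji : j ≠ i) :
    j ∈ (R.ord i).take (R.pos i) := by
  rcases (R.wit_spec i).eq_empty_or_validSub with hempty | hvalid
  · simp [hempty] at hj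
  · exact (hvalid.2.1 j hj).resolve_left hji

end Proc1Run

/-- Observation 3.2: languages in the witness have smaller complexity.
For every `i`, the witness subcollection `C(L_i)` is either empty or contains some
language `L j ≠ L i` with `j < i`; moreover every language `L j ≠ L i` in `C(L_i)`
satisfies `m*(L_j) < m*(L_i)`. (0-based indexing.) -/
theorem stmt_0 (L : ℕ → Set ℕ) (hL : ∀ i, (L i).Infinite) (R : Proc1Run L) (i : ℕ) :
    (R.wit i = ∅ ∨ ∃ j ∈ R.wit i, j < i ∧ L j ≠ L i) ∧
      ∀ j ∈ R.wit i, L j ≠ L i → R.mstar j < R.mstar i := by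
  have hlt : ∀ j ∈ R.wit i, L j ≠ L i → R.mstar j < R.mstar i := fun j hj hne =>
    R.mstar_lt_of_mem_take_pos (R.pairwise_ord i)
      (R.mem_take_pos_of_mem_wit hj (ne_of_apply_ne L hne))
  refine ⟨?_, hlt⟩
  rcases (R.wit_spec i).eq_empty_or_validSub with hempty | hvalid
  · exact Or.inl hempty
  · obtain ⟨j, hj, hne⟩ := hvalid.exists_ne (hL i)
    have hji : j ∈ (R.ord i).take (R.pos i) :=
      R.mem_take_pos_of_mem_wit hj (ne_of_apply_ne L hne)
    exact Or.inr ⟨j, hj, R.lt_of_mem_ord (List.take_subset _ _ hji), hne⟩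
end

section
/- For every countable collection C = (L_1, L_2, ...) of languages and every finite n, there exists a generating algorithm G that non-uniformly generates from C, whose generation times t_G(L_1), t_G(L_2), ... satisfy: any other generating algorithm G' that non-uniformly generates from C and whose generation time t_{G'}(L_i) for some language L_i with i ≤ n is strictly smaller than t_G(L_i), must have t_{G'}(L_j) strictly larger than t_G(L_j) for some other language L_j with j ≤ n. -/
/-- The input prefix `x_1, ..., x_t` presented to the algorithm at time `t`. -/
def inputList (x : ℕ → ℕ) (t : ℕ) : List ℕ := (List.range t).map x

/-- `S_t`: the set of distinct strings among the first `t` inputs. -/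
def Sfin (x : ℕ → ℕ) (t : ℕ) : Finset ℕ := (inputList x t).toFinset

/-- `x` is an enumeration of the language `Lang`: every term lies in `Lang` and every
string of `Lang` appears at some finite time. -/
def IsEnumOf (x : ℕ → ℕ) (Lang : Set ℕ) : Prop :=
  (∀ t, x t ∈ Lang) ∧ ∀ s ∈ Lang, ∃ t, x t = s

/-- The (deterministic) generating algorithm `G` non-uniformly generates from the
collection `L` with generation times `tG`: for every language `L i` and every
enumeration of it, at every time `t ≥ 1` with `|S_t| ≥ tG i` the output is a new
string of `L i`. -/
def NonUniformGen (G : List ℕ → ℕ) (L : ℕ → Set ℕ) (tG : ℕ → ℕ) : Prop :=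
  ∀ i (x : ℕ → ℕ), IsEnumOf x (L i) → ∀ t, 1 ≤ t → tG i ≤ (Sfin x t).card →
    G (inputList x t) ∈ L i \ ↑(Sfin x t)

open Classical in
noncomputable def interCard (L : ℕ → Set ℕ) (T : Finset ℕ) : ℕ :=
  if h : (⋂ j ∈ T, L j).Finite then h.toFinset.card else 0

open Classical in
noncomputable def tGdef (L : ℕ → Set ℕ) (i : ℕ) : ℕ :=
  i + 1 + ((Finset.range (i+1)).powerset.filter (fun T => i ∈ T)).sup (interCard L)

open Classical in
noncomputable def activeSet (L : ℕ → Set ℕ) (l : List ℕ) : Finset ℕ :=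
  (Finset.range (l.toFinset.card + 1)).filter
    (fun i => tGdef L i ≤ l.toFinset.card ∧ ↑l.toFinset ⊆ L i)

lemma keyLemma (L : ℕ → Set ℕ) (l : List ℕ) :
    ((⋂ i ∈ activeSet L l, L i) \ ↑l.toFinset).Nonempty := by
  classical
  have hinf : (⋂ i ∈ activeSet L l, L i).Infinite := by
    rcases (activeSet L l).eq_empty_or_nonempty with hA | hA
    · rw [hA]
      simp only [Finset.notMem_empty, Set.iInter_of_empty, Set.iInter_univ]
      exact Set.infinite_univ
    · by_contra hfin
      rw [Set.not_infinite] at hfin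
      set A := activeSet L l with hAdef
      set i := A.max' hA with hi
      have hiA : i ∈ A := A.max'_mem hA
      have hmem := hiA
      rw [hAdef, activeSet, Finset.mem_filter] at hmem
      obtain ⟨-, htle, hsub⟩ := hmem
      -- S ⊆ ⋂
      have hSsub : ↑l.toFinset ⊆ ⋂ j ∈ A, L j := by
        intro s hs
        simp only [Set.mem_iInter]
        intro j hj
        have hj' := hj
        rw [hAdef, activeSet, Finset.mem_filter] at hj'
        exact hj'.2.2 hs
      have hScard : l.toFinset.card ≤ hfin.toFinset.card := by
        apply Finset.card_le_card
        intro s hs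
        rw [Set.Finite.mem_toFinset]
        exact hSsub hs
      -- A is in the sup index set for i
      classical
      have hApow : A ∈ (Finset.range (i+1)).powerset.filter (fun T => i ∈ T) := by
        simp only [Finset.mem_filter, Finset.mem_powerset]
        refine ⟨fun j hj => ?_, hiA⟩
        rw [Finset.mem_range, Nat.lt_succ_iff]
        exact A.le_max' j hj
      have hsup : interCard L A ≤
          ((Finset.range (i+1)).powerset.filter (fun T => i ∈ T)).sup (interCard L) :=
        Finset.le_sup hApow
      have hic : interCard L A = hfin.toFinset.card := by
        simp only [interCard, dif_pos hfin]
      have : tGdef L i ≤ l.toFinset.card := htle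
      rw [tGdef] at this
      omega
  exact (hinf.diff (l.toFinset.finite_toSet)).nonempty

noncomputable def Gdef (L : ℕ → Set ℕ) (l : List ℕ) : ℕ := (keyLemma L l).choose

lemma Gdef_spec (L : ℕ → Set ℕ) (l : List ℕ) :
    Gdef L l ∈ (⋂ i ∈ activeSet L l, L i) \ ↑l.toFinset := (keyLemma L l).choose_spec

lemma gen_exists (L : ℕ → Set ℕ) : NonUniformGen (Gdef L) L (tGdef L) := by
  classical
  intro i x hx t ht hcard
  set l := inputList x t with hl
  have hS : Sfin x t = l.toFinset := rfl
  have hsub : (↑l.toFinset : Set ℕ) ⊆ L i := by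
    intro s hs
    simp only [Finset.coe_sort_coe, Finset.mem_coe, List.mem_toFinset, hl, inputList,
      List.mem_map, List.mem_range] at hs
    obtain ⟨k, -, rfl⟩ := hs
    exact hx.1 k
  have hcard' : tGdef L i ≤ l.toFinset.card := by rwa [hS] at hcard
  have hiA : i ∈ activeSet L l := by
    rw [activeSet, Finset.mem_filter, Finset.mem_range]
    refine ⟨?_, hcard', hsub⟩
    have : i + 1 ≤ tGdef L i := by rw [tGdef]; omega
    omega
  have h := Gdef_spec L l
  rw [hS]
  exact ⟨Set.biInter_subset_of_mem hiA h.1, h.2⟩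


/-- Theorem 1.1: almost Pareto-optimal non-uniform generation. For any
countable collection `L` of (infinite) languages and any finite `n`, there is an
algorithm `G` non-uniformly generating from `L` whose generation times satisfy: any
other algorithm `G'` non-uniformly generating from `L` whose generation time for some
`L i` with `i < n` is strictly smaller than `tG i` must have, for some other `j < n`,
generation time strictly larger than `tG j`. (0-based indexing.) -/
theorem stmt_4 (L : ℕ → Set ℕ) (hL : ∀ i, (L i).Infinite) (n : ℕ) :
    ∃ (G : List ℕ → ℕ) (tG : ℕ → ℕ), NonUniformGen G L tG ∧
      ∀ (G' : List ℕ → ℕ) (tG' : ℕ → ℕ), NonUniformGen G' L tG' →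
        ∀ i < n, tG' i < tG i → ∃ j, j < n ∧ j ≠ i ∧ tG j < tG' j := by
  classical
  have hex : ∃ s, ∃ G tG, NonUniformGen G L tG ∧ (∑ i ∈ Finset.range n, tG i) = s :=
    ⟨_, Gdef L, tGdef L, gen_exists L, rfl⟩
  obtain ⟨G, tG, hgen, hsum⟩ := Nat.find_spec hex
  refine ⟨G, tG, hgen, ?_⟩
  intro G' tG' hgen' i hin hlt
  by_contra hcon
  push_neg at hcon
  have hle : ∀ j ∈ Finset.range n, tG' j ≤ tG j := by
    intro j hj
    rw [Finset.mem_range] at hj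
    by_cases hji : j = i
    · subst hji; omega
    · exact hcon j hj hji
  have hslt : (∑ j ∈ Finset.range n, tG' j) < ∑ j ∈ Finset.range n, tG j := by
    exact Finset.sum_lt_sum hle ⟨i, Finset.mem_range.mpr hin, hlt⟩
  have hmin := Nat.find_min hex (m := ∑ j ∈ Finset.range n, tG' j) (by omega)
  exact hmin ⟨G', tG', hgen', rfl⟩
end

section
/- Let C be the collection consisting of the languages ℤ \ {i} for all i ∈ ℤ, over the universe ℤ. Then no generating algorithm achieves a Pareto-optimal sequence of non-uniform generation times for C: for every algorithm G that non-uniformly generates from C with generation times t_G(L) (L ∈ C), there exists another algorithm G' that non-uniformly generates from C with t_{G'}(L_i) < t_G(L_i) for some language L_i ∈ C and t_{G'}(L_j) ≤ t_G(L_j) for every other language L_j ∈ C. -/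
/-!
Since every nonempty finite list avoiding `j` extends to an enumeration of `ℤ \ {j}`, generation
from `C` is a condition on single lists: `G l ∉ j :: l` whenever `j ∉ l` and `l` has at least
`t_G(L_j)` distinct elements. Some `t_G(L_{i₀})` is positive, as otherwise `G [0]` would avoid
every integer. The faster algorithm, on an input of `t_G(L_{i₀}) - 1` distinct strings avoiding
`i₀`, prepends a fresh string `w ≠ i₀` and answers as `G` does. The padded list is large enough for `L_{i₀}`, so the answer avoids `i₀`, `w` and the
input; every other admissible `j` is also admissible for the padded list.
-/

/-- The input prefix `x_1, ..., x_t` presented to the algorithm at time `t`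
(universe `ℤ`). -/
def inputListZ (x : ℕ → ℤ) (t : ℕ) : List ℤ := (List.range t).map x

/-- `S_t`: the set of distinct strings among the first `t` inputs. -/
def SfinZ (x : ℕ → ℤ) (t : ℕ) : Finset ℤ := (inputListZ x t).toFinset

/-- `x` is an enumeration of the language `Lang ⊆ ℤ`. -/
def IsEnumOfZ (x : ℕ → ℤ) (Lang : Set ℤ) : Prop :=
  (∀ t, x t ∈ Lang) ∧ ∀ s ∈ Lang, ∃ t, x t = s

/-- Non-uniform generation from a collection of languages over `ℤ` indexed by `ℤ`. -/
def NonUniformGenZ (G : List ℤ → ℤ) (L : ℤ → Set ℤ) (tG : ℤ → ℕ) : Prop :=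
  ∀ i (x : ℕ → ℤ), IsEnumOfZ x (L i) → ∀ t, 1 ≤ t → tG i ≤ (SfinZ x t).card →
    G (inputListZ x t) ∈ L i \ ↑(SfinZ x t)

lemma exists_isEnumOfZ_inputListZ_eq {A : Set ℤ} (hA : A.Nonempty) {l : List ℤ}
    (hl : ∀ a ∈ l, a ∈ A) : ∃ x, IsEnumOfZ x A ∧ inputListZ x l.length = l := by
  obtain ⟨f, rfl⟩ := A.to_countable.exists_eq_range hA
  refine ⟨fun k => l.getD k (f (k - l.length)), ⟨fun k => ?_, ?_⟩, ?_⟩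
  · dsimp only
    rcases lt_or_ge k l.length with hk | hk
    · rw [List.getD_eq_getElem _ _ hk]
      exact hl _ (List.getElem_mem hk)
    · rw [List.getD_eq_default _ _ hk]
      exact Set.mem_range_self _
  · rintro _ ⟨n, rfl⟩
    refine ⟨l.length + n, ?_⟩
    dsimp only
    rw [List.getD_eq_default _ _ (by omega), Nat.add_sub_cancel_left]
  · refine List.ext_getElem (by simp [inputListZ]) fun n hn _ => ?_
    simp only [inputListZ, List.getElem_map, List.getElem_range]
    exact List.getD_eq_getElem _ _ (by simpa [inputListZ] using hn)

lemma NonUniformGenZ.apply_mem_diff {G : List ℤ → ℤ} {L : ℤ → Set ℤ} {tG : ℤ → ℕ}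
    (hG : NonUniformGenZ G L tG) {i : ℤ} {l : List ℤ} (hl : l ≠ []) (hlL : ∀ a ∈ l, a ∈ L i)
    (ht : tG i ≤ l.toFinset.card) : G l ∈ L i \ ↑l.toFinset := by
  obtain ⟨a, ha⟩ := List.exists_mem_of_ne_nil l hl
  obtain ⟨x, hx, hxl⟩ := exists_isEnumOfZ_inputListZ_eq ⟨a, hlL a ha⟩ hlL
  have h := hG i x hx l.length (List.length_pos_iff.2 hl) (by rwa [SfinZ, hxl])
  rwa [SfinZ, hxl] at h

lemma nonUniformGenZ_compl_iff {G : List ℤ → ℤ} {tG : ℤ → ℕ} :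
    NonUniformGenZ G (fun i => ({i}ᶜ : Set ℤ)) tG ↔
      ∀ l : List ℤ, l ≠ [] → ∀ j ∉ l, tG j ≤ l.toFinset.card → G l ∉ j :: l := by
  constructor
  · intro hG l hl j hj ht
    have h := hG.apply_mem_diff hl (fun a ha => by rintro rfl; exact hj ha) ht
    simpa [List.mem_cons, not_or] using h
  · intro hG j x hx t ht hcard
    have hj : j ∉ inputListZ x t := by
      simpa [inputListZ, eq_comm] using fun k _ => hx.1 k
    have hne : inputListZ x t ≠ [] := by
      simpa [inputListZ, List.range_eq_nil] using Nat.one_le_iff_ne_zero.1 ht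
    simpa [SfinZ, List.mem_cons, not_or] using hG _ hne j hj hcard

noncomputable def fresh (s : Finset ℤ) : ℤ := (Infinite.exists_notMem_finset s).choose

lemma fresh_notMem (s : Finset ℤ) : fresh s ∉ s := (Infinite.exists_notMem_finset s).choose_spec

noncomputable def padAt (G : List ℤ → ℤ) (i₀ : ℤ) (m : ℕ) (l : List ℤ) : ℤ :=
  if l.toFinset.card = m ∧ i₀ ∉ l then G (fresh (insert i₀ l.toFinset) :: l) else G l

lemma exists_one_le_of_nonUniformGenZ_compl {G : List ℤ → ℤ} {tG : ℤ → ℕ}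
    (hG : NonUniformGenZ G (fun i => ({i}ᶜ : Set ℤ)) tG) : ∃ i, 1 ≤ tG i := by
  rw [nonUniformGenZ_compl_iff] at hG
  by_contra! h
  have hle : ∀ i, tG i ≤ [(0 : ℤ)].toFinset.card := fun i => by simpa using (h i).le
  have h1 : G [0] ∉ [1, 0] := hG [0] (List.cons_ne_nil _ _) 1 (by simp) (hle 1)
  exact hG [0] (List.cons_ne_nil _ _) (G [0]) (fun h => h1 (by simp_all)) (hle _)
    List.mem_cons_self

lemma nonUniformGenZ_padAt {G : List ℤ → ℤ} {tG : ℤ → ℕ}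
    (hG : NonUniformGenZ G (fun i => ({i}ᶜ : Set ℤ)) tG) {i₀ : ℤ} {m : ℕ} (hm : tG i₀ = m + 1) :
    NonUniformGenZ (padAt G i₀ m) (fun i => ({i}ᶜ : Set ℤ)) (Function.update tG i₀ m) := by
  rw [nonUniformGenZ_compl_iff] at hG ⊢
  intro l hl j hj ht
  unfold padAt
  split_ifs with hpad
  · obtain ⟨hcard, hi₀⟩ := hpad
    set w := fresh (insert i₀ l.toFinset)
    have hw : w ≠ i₀ ∧ w ∉ l := by
      simpa [not_or] using fresh_notMem (insert i₀ l.toFinset)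
    have hcard' : (w :: l).toFinset.card = m + 1 := by
      rw [List.toFinset_cons, Finset.card_insert_of_notMem (by simpa using hw.2), hcard]
    have hGi₀ : G (w :: l) ∉ i₀ :: w :: l :=
      hG _ (List.cons_ne_nil _ _) i₀ (by simp [hi₀, hw.1.symm]) (by omega)
    by_cases hj' : j = i₀ ∨ j = w
    · exact fun h => hGi₀ (by rcases hj' with rfl | rfl <;> simp_all)
    · rw [not_or] at hj'
      have htj : tG j ≤ m := by simpa [Function.update_of_ne hj'.1, hcard] using ht
      have hGj : G (w :: l) ∉ j :: w :: l :=
        hG _ (List.cons_ne_nil _ _) j (by simp [hj, hj'.2]) (by omega)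
      exact fun h => hGj (List.cons_subset_cons j (List.subset_cons_self w l) h)
  · refine hG l hl j hj ?_
    rcases eq_or_ne j i₀ with rfl | hji
    · have : l.toFinset.card ≠ m := fun h => hpad ⟨h, hj⟩
      rw [Function.update_self] at ht
      omega
    · rwa [Function.update_of_ne hji] at ht

/-- Proposition 3.7. For the collection `C = {ℤ \ {i}}_{i ∈ ℤ}`, no
algorithm achieves Pareto-optimal non-uniform generation times: every algorithm `G`
non-uniformly generating from `C` is strictly Pareto-dominated by another algorithm
`G'` non-uniformly generating from `C`. -/
theorem stmt_7 (G : List ℤ → ℤ) (tG : ℤ → ℕ)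
    (hG : NonUniformGenZ G (fun i => ({i}ᶜ : Set ℤ)) tG) :
    ∃ (G' : List ℤ → ℤ) (tG' : ℤ → ℕ),
      NonUniformGenZ G' (fun i => ({i}ᶜ : Set ℤ)) tG' ∧
        (∃ i, tG' i < tG i) ∧ ∀ j, tG' j ≤ tG j := by
  obtain ⟨i₀, hi₀⟩ := exists_one_le_of_nonUniformGenZ_compl hG
  refine ⟨padAt G i₀ (tG i₀ - 1), Function.update tG i₀ (tG i₀ - 1),
    nonUniformGenZ_padAt hG (by omega), ⟨i₀, by rw [Function.update_self]; omega⟩,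
    fun j => ?_⟩
  rw [Function.update_apply]
  split_ifs with hj
  · subst hj; omega
  · rfl
end

section
/- Let L_{e_1}, L_{e_2}, L_{e_3}, ... be an enumeration without repetition of the languages L_{e_i} = ℤ \ {e_i} (e_i ∈ ℤ) over the universe ℤ, and let t_1, t_2, t_3, ... be a sequence of finite integers, each at least 1, that is admissible: for every t ≥ 1, the set {i : t_i ≥ t} is infinite. Then there exists a generating algorithm (which may be taken oblivious to its input) that non-uniformly generates from the collection (L_{e_1}, L_{e_2}, ...) with generation time at most t_i for every language L_{e_i}. -/
/-- Non-uniform generation from a collection of languages over `ℤ` indexed by `ℕ`. -/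
def NonUniformGenZN (G : List ℤ → ℤ) (L : ℕ → Set ℤ) (tG : ℕ → ℕ) : Prop :=
  ∀ i (x : ℕ → ℤ), IsEnumOfZ x (L i) → ∀ t, 1 ≤ t → tG i ≤ (SfinZ x t).card →
    G (inputListZ x t) ∈ L i \ ↑(SfinZ x t)

/-- from the proof of Proposition 3.7. Let `L_{e_1}, L_{e_2}, ...` be
an enumeration without repetition of languages `L_{e_i} = ℤ \ {e_i}`, and let
`t_1, t_2, ...` be finite candidate generation times, each at least `1`, forming an
admissible sequence (for every `T ≥ 1` the set `{i : t_i ≥ T}` is infinite). Then some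
algorithm non-uniformly generates from the collection with generation time at most
`t_i` for every language `L_{e_i}`. -/
theorem stmt_8 (e : ℕ → ℤ) (he : Function.Injective e)
    (t : ℕ → ℕ) (ht : ∀ i, 1 ≤ t i)
    (hadm : ∀ T : ℕ, 1 ≤ T → {i : ℕ | T ≤ t i}.Infinite) :
    ∃ (G : List ℤ → ℤ) (tG : ℕ → ℕ),
      NonUniformGenZN G (fun i => ({e i}ᶜ : Set ℤ)) tG ∧ ∀ i, tG i ≤ t i := by
  classical
  -- From admissibility, extract arbitrarily large indices with large times.
  have step : ∀ (a k : ℕ), ∃ b, a < b ∧ k + 1 ≤ t b := by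
    intro a k
    have h := (hadm (k + 1) (Nat.le_add_left 1 k)).diff (Set.finite_Iic a)
    obtain ⟨b, hb1, hb2⟩ := h.nonempty
    exact ⟨b, by simpa using hb2, hb1⟩
  -- An injective `σ` with `k + 1 ≤ t (σ k)`.
  obtain ⟨σ, hσinj, hσt⟩ : ∃ σ : ℕ → ℕ, Function.Injective σ ∧ ∀ k, k + 1 ≤ t (σ k) := by
    choose f hf1 hf2 using step
    refine ⟨fun k => Nat.rec (f 0 0) (fun k ih => f ih (k + 1)) k,
      (strictMono_nat_of_lt_succ (fun k => hf1 _ _)).injective, ?_⟩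
    intro k
    cases k with
    | zero => exact hf2 0 0
    | succ k => exact hf2 _ _
  -- The generation-time bounds.
  set tG : ℕ → ℕ := fun i => if h : ∃ k, σ k = i then h.choose + 1 else 0 with htGdef
  have htGσ : ∀ k, tG (σ k) = k + 1 := by
    intro k
    have h : ∃ j, σ j = σ k := ⟨k, rfl⟩
    simp only [htGdef, dif_pos h]
    exact congrArg (· + 1) (hσinj h.choose_spec)
  have htGle : ∀ i, tG i ≤ t i := by
    intro i
    by_cases h : ∃ k, σ k = i
    · simp only [htGdef, dif_pos h]
      have := hσt h.choose
      rwa [h.choose_spec] at this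
    · simp [htGdef, dif_neg h]
  -- Candidate outputs for an input list `l`.
  set cand : List ℤ → Finset ℤ := fun l =>
    ((Finset.range (l.toFinset.card + 1)).image
      (fun k => e (σ (l.toFinset.card + k)))) \ l.toFinset with hcand
  have hne : ∀ l, (cand l).Nonempty := by
    intro l
    set c := l.toFinset.card with hc
    have hinj : Set.InjOn (fun k => e (σ (c + k))) (Finset.range (c + 1)) := by
      intro a _ b _ hab
      have := hσinj (he hab)
      omega
    have hcardim : ((Finset.range (c + 1)).image (fun k => e (σ (c + k)))).card = c + 1 := by
      rw [Finset.card_image_of_injOn hinj, Finset.card_range]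
    rw [Finset.nonempty_iff_ne_empty]
    intro hemp
    have hsub : ((Finset.range (c + 1)).image (fun k => e (σ (c + k)))) ⊆ l.toFinset :=
      Finset.sdiff_eq_empty_iff_subset.mp hemp
    have := Finset.card_le_card hsub
    omega
  refine ⟨fun l => (cand l).min' (hne l), tG, ?_, htGle⟩
  intro i x hx T hT hcard
  set l := inputListZ x T with hl
  have hz := Finset.min'_mem (cand l) (hne l)
  set z := (cand l).min' (hne l) with hzdef
  rw [hcand] at hz
  simp only [Finset.mem_sdiff, Finset.mem_image, Finset.mem_range] at hz
  obtain ⟨⟨k, hk, hzk⟩, hznS⟩ := hz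
  have hS : SfinZ x T = l.toFinset := rfl
  constructor
  · -- `z ≠ e i`
    simp only [Set.mem_compl_iff, Set.mem_singleton_iff]
    intro hzi
    have hieq : i = σ (l.toFinset.card + k) := he (hzi.symm.trans hzk.symm)
    have : tG i = l.toFinset.card + k + 1 := by rw [hieq]; exact htGσ _
    rw [hS] at hcard
    omega
  · -- `z ∉ S_T`
    rw [hS]
    exact fun hmem => hznS (by exact_mod_cast hmem)
end

section
/- Let C be the collection consisting of the languages {1, 2, ..., 100} ∪ ℤ_{≥ i} for all i ∈ ℤ, where ℤ_{≥ i} = {i, i+1, i+2, ...}, over the universe ℤ. Then no generating algorithm achieves a Pareto-optimal sequence of non-uniform generation times for C: for every algorithm G that non-uniformly generates from C with generation times t_G(L) (L ∈ C), there exists another algorithm G' that non-uniformly generates from C with t_{G'}(L_i) < t_G(L_i) for some language L_i ∈ C and t_{G'}(L_j) ≤ t_G(L_j) for every other language L_j ∈ C. -/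
/-- The language `{1, ..., 100} ∪ ℤ_{≥ i}`. -/
def Lang9 (i : ℤ) : Set ℤ := {z : ℤ | (1 ≤ z ∧ z ≤ 100) ∨ i ≤ z}

/-!
Let `z` be the output of `G` on the input `1, 2, …, 100`. Every language `Lang9 j` has an
enumeration starting with `1, …, 100`, so if `tG j ≤ 100` then `z ∈ Lang9 j \ {1, …, 100}`, i.e.
`j ≤ z`. Hence `a := max z 100 + 1` has `tG a ≥ 101`. The improved algorithm outputs one more than
the maximum of the input and `a` once it has seen `100` distinct strings, and runs `G` before.
This is correct for `Lang9 a` from time `100` on and for every other language from time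
`min (tG j) 101` on: for `j ≤ a` the output exceeds `a`, and for `j > a` we have `tG j ≥ 101`,
and `101` distinct strings of `Lang9 j` include one that is `≥ j`.
-/

def firstHundred : List ℤ := (List.range 100).map fun n : ℕ => (n : ℤ) + 1

lemma mem_firstHundred {s : ℤ} : s ∈ firstHundred ↔ 1 ≤ s ∧ s ≤ 100 := by
  simp only [firstHundred, List.mem_map, List.mem_range]
  constructor
  · rintro ⟨n, hn, rfl⟩
    omega
  · rintro ⟨h1, h2⟩
    exact ⟨(s - 1).toNat, by omega, by omega⟩

def enumFrom (j : ℤ) (n : ℕ) : ℤ := if n < 100 then n + 1 else j + (n - 100)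

lemma isEnumOfZ_enumFrom (j : ℤ) : IsEnumOfZ (enumFrom j) (Lang9 j) := by
  constructor
  · intro n
    by_cases hn : n < 100
    · left
      simp only [enumFrom, hn, if_true]
      omega
    · right
      simp only [enumFrom, hn, if_false]
      omega
  · rintro s (⟨h1, h2⟩ | h)
    · exact ⟨(s - 1).toNat, by simp only [enumFrom]; split_ifs <;> omega⟩
    · exact ⟨100 + (s - j).toNat, by simp only [enumFrom]; split_ifs <;> omega⟩

lemma inputListZ_enumFrom (j : ℤ) : inputListZ (enumFrom j) 100 = firstHundred := by
  refine List.map_congr_left fun n hn => ?_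
  simp only [enumFrom, List.mem_range.mp hn, if_true]

lemma card_SfinZ_enumFrom (j : ℤ) : (SfinZ (enumFrom j) 100).card = 100 := by
  rw [SfinZ, inputListZ_enumFrom, List.toFinset_card_of_nodup]
  · simp [firstHundred]
  · exact List.nodup_range.map fun a b h => by omega

lemma coe_SfinZ_subset {x : ℕ → ℤ} {L : Set ℤ} (hx : IsEnumOfZ x L) (t : ℕ) :
    ↑(SfinZ x t) ⊆ L := by
  intro s hs
  obtain ⟨n, -, rfl⟩ := List.mem_map.mp (List.mem_toFinset.mp hs)
  exact hx.1 n

lemma mem_Lang9_iff_of_hundred_lt {j z : ℤ} (hz : 100 < z) : z ∈ Lang9 j ↔ j ≤ z := by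
  simp only [Lang9, Set.mem_ofPred_eq]
  omega

lemma exists_le_of_subset_Lang9 {j : ℤ} {S : Finset ℤ} (hS : ↑S ⊆ Lang9 j)
    (hcard : 101 ≤ S.card) : ∃ s ∈ S, j ≤ s := by
  by_contra! hlt
  have hsub : S ⊆ Finset.Icc 1 100 := fun s hs => by
    rcases hS hs with ⟨h1, h2⟩ | h
    · exact Finset.mem_Icc.mpr ⟨h1, h2⟩
    · exact absurd h (not_le.mpr (hlt s hs))
  have := Finset.card_le_card hsub
  simp only [Int.card_Icc] at this
  omega

lemma hundred_lt_time {G : List ℤ → ℤ} {tG : ℤ → ℕ} (hG : NonUniformGenZ G Lang9 tG)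
    {j : ℤ} (hj : G firstHundred < j) : 100 < tG j := by
  by_contra! htime
  have hout := hG j _ (isEnumOfZ_enumFrom j) 100 (by norm_num)
    (by rw [card_SfinZ_enumFrom]; exact htime)
  rw [SfinZ, inputListZ_enumFrom] at hout
  obtain ⟨h | h, hfresh⟩ := hout
  · exact hfresh (List.mem_toFinset.mpr (mem_firstHundred.mpr h))
  · exact h.not_gt hj

def aboveAll (a : ℤ) (w : List ℤ) : ℤ := (insert a w.toFinset).max' (Finset.insert_nonempty _ _) + 1

lemma lt_aboveAll (a : ℤ) (w : List ℤ) : a < aboveAll a w :=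
  Int.lt_add_one_iff.mpr (Finset.le_max' _ _ (Finset.mem_insert_self _ _))

lemma lt_aboveAll_of_mem {a s : ℤ} {w : List ℤ} (hs : s ∈ w) : s < aboveAll a w :=
  Int.lt_add_one_iff.mpr
    (Finset.le_max' _ _ (Finset.mem_insert_of_mem (List.mem_toFinset.mpr hs)))

def improvedGen (G : List ℤ → ℤ) (a : ℤ) (w : List ℤ) : ℤ :=
  if 100 ≤ w.toFinset.card then aboveAll a w else G w

def improvedTime (tG : ℤ → ℕ) (a j : ℤ) : ℕ := if j = a then 100 else min (tG j) 101

section Improved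

variable {G : List ℤ → ℤ} {tG : ℤ → ℕ} {a : ℤ}

lemma nonUniformGenZ_improvedGen (hG : NonUniformGenZ G Lang9 tG) (ha : 100 ≤ a)
    (hslow : ∀ j, a < j → 100 < tG j) :
    NonUniformGenZ (improvedGen G a) Lang9 (improvedTime tG a) := by
  intro j x hx t ht hcard
  by_cases hS : 100 ≤ (SfinZ x t).card
  · have hout : improvedGen G a (inputListZ x t) = aboveAll a (inputListZ x t) := if_pos hS
    have hlarge : 100 < aboveAll a (inputListZ x t) := ha.trans_lt (lt_aboveAll a _)
    rw [hout]
    refine ⟨(mem_Lang9_iff_of_hundred_lt hlarge).mpr ?_,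
      fun hmem => (lt_aboveAll_of_mem (List.mem_toFinset.mp hmem)).false⟩
    by_cases hja : j ≤ a
    · exact hja.trans (lt_aboveAll a _).le
    · have htime := hslow j (not_le.mp hja)
      have hcard' : 101 ≤ (SfinZ x t).card := by
        simp only [improvedTime, show j ≠ a by omega, if_false] at hcard
        omega
      obtain ⟨s, hs, hjs⟩ := exists_le_of_subset_Lang9 (coe_SfinZ_subset hx t) hcard'
      exact hjs.trans (lt_aboveAll_of_mem (List.mem_toFinset.mp hs)).le
  · have hja : j ≠ a := by
      rintro rfl
      exact hS (by simpa [improvedTime] using hcard)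
    have htime : tG j ≤ (SfinZ x t).card := by
      simp only [improvedTime, hja, if_false] at hcard
      omega
    have hout : improvedGen G a (inputListZ x t) = G (inputListZ x t) := if_neg hS
    rw [hout]
    exact hG j x hx t ht htime

lemma improvedTime_self : improvedTime tG a a = 100 := if_pos rfl

lemma improvedTime_le (hslow : 100 < tG a) (j : ℤ) : improvedTime tG a j ≤ tG j := by
  by_cases hja : j = a
  · subst hja
    exact improvedTime_self.trans_le hslow.le
  · simp only [improvedTime, hja, if_false]
    exact min_le_left _ _

end Improved

/-- Proposition 3.8. For the collection of languages
`{1,...,100} ∪ ℤ_{≥ i}`, `i ∈ ℤ`, no algorithm achieves Pareto-optimal non-uniform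
generation times: every algorithm `G` non-uniformly generating from the collection is
strictly Pareto-dominated by another algorithm `G'`. -/
theorem stmt_9 (G : List ℤ → ℤ) (tG : ℤ → ℕ)
    (hG : NonUniformGenZ G Lang9 tG) :
    ∃ (G' : List ℤ → ℤ) (tG' : ℤ → ℕ),
      NonUniformGenZ G' Lang9 tG' ∧ (∃ i, tG' i < tG i) ∧ ∀ j, tG' j ≤ tG j := by
  set a := max (G firstHundred) 100 + 1
  have hslow : ∀ j, a ≤ j → 100 < tG j := fun j hj => hundred_lt_time hG (by omega)
  refine ⟨improvedGen G a, improvedTime tG a,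
    nonUniformGenZ_improvedGen hG (by omega) fun j hj => hslow j hj.le,
    ⟨a, improvedTime_self.trans_lt (hslow a le_rfl)⟩, improvedTime_le (hslow a le_rfl)⟩
end

section
/- Let C = (L_1, L_2, ...) be a countable collection of languages and run Procedure 2 on it. Then in every iteration, the candidate witness set T considered in Step A of the while loop of Procedure 2 has bounded size; in particular, the noisy non-uniform complexity m*_n(L_i) is finite for every noise level n ≥ 0 and every index i ≥ 1. -/
set_option maxHeartbeats 1000000


/-- The successor of a grid entry `(n, c)` (noise level `n`, 0-based language index `c`)
in the diagonal traversal order `(0,0), (1,0), (0,1), (2,0), (1,1), (0,2), ...`. -/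
def nextEnt : ℕ × ℕ → ℕ × ℕ :=
  fun p => if p.1 = 0 then (p.2 + 1, 0) else (p.1 - 1, p.2 + 1)

/-- The `l`-th grid entry (0-based) in the diagonal traversal order; `ent l = (n, c)`
stands for the copy `L_{n, c+1}` of the language `L (c)` at noise level `n`. -/
def ent : ℕ → ℕ × ℕ := fun l => nextEnt^[l] (0, 0)

/-- The 0-based position of the grid entry `(n, c)` in the diagonal traversal, so that
`|diag(C_{n, c+1})| = gridIdx n c + 1`. -/
def gridIdx (n c : ℕ) : ℕ := (n + c) * (n + c + 1) / 2 + c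

/-- `Lang` `a`-contains the finite set `T`: at most `a` elements of `T` lie outside
`Lang`. -/
def AContains (Lang : Set ℕ) (a : ℕ) (T : Finset ℕ) : Prop :=
  ((↑T : Set ℕ) \ Lang).ncard ≤ a

/-- A valid pair `(s, T)` for Step A of Procedure 2: `s` is a subcollection (a finite
set of grid entries, drawn from the prefix `pre` or equal to `last`) containing `last`,
such that for every entry `(a, b) ∈ s` the set `T` is `a`-contained in `L b`, and the
intersection of the languages of `s` is finite. -/
def ValidSubN (L : ℕ → Set ℕ) (pre : List (ℕ × ℕ)) (last : ℕ × ℕ)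
    (s : Finset (ℕ × ℕ)) (T : Finset ℕ) : Prop :=
  last ∈ s ∧ (∀ p ∈ s, p = last ∨ p ∈ pre) ∧
    (∀ p ∈ s, AContains (L p.2) p.1 T) ∧ (⋂ p ∈ s, L p.2).Finite

/-- `m` is the value `m_chk` of Step A of Procedure 2: the largest size of a valid
witness set `T` (and `0` if none exists). -/
def IsMchkN (L : ℕ → Set ℕ) (pre : List (ℕ × ℕ)) (last : ℕ × ℕ) (m : ℕ) : Prop :=
  ((¬ ∃ s T, ValidSubN L pre last s T) ∧ m = 0) ∨
    ((∃ s T, ValidSubN L pre last s T ∧ T.card = m) ∧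
      ∀ s T, ValidSubN L pre last s T → T.card ≤ m)

/-- `(sC, sT)` witness `m = m_chk` in Step A of Procedure 2 (with everything empty and
`m = 0` if no valid pair exists). -/
def WitnessAtN (L : ℕ → Set ℕ) (pre : List (ℕ × ℕ)) (last : ℕ × ℕ)
    (sC : Finset (ℕ × ℕ)) (sT : Finset ℕ) (m : ℕ) : Prop :=
  ((¬ ∃ s T, ValidSubN L pre last s T) ∧ sC = ∅ ∧ sT = ∅ ∧ m = 0) ∨
    (ValidSubN L pre last sC sT ∧ sT.card = m ∧
      ∀ s T, ValidSubN L pre last s T → T.card ≤ m)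

/-- A run of Procedure 2 (insertion sort for noisy non-uniform generation) on the
collection `L 0, L 1, ...` (0-based: column `c` of the grid is language `L c`, i.e. the
paper's `L_{c+1}`). `ord l` is the maintained ordering `C'_l` of the first `l` grid
entries, `pos l` is the (0-based) position at which the grid entry `ent l` is finally
inserted during iteration `l + 1`, and `witT (n, c)`, `witC (n, c)`, `mstar (n, c)` are
`T(L_{n, c+1})`, `C(L_{n, c+1})` and `m*_n(L_{c+1})`. -/
structure Proc2Run (L : ℕ → Set ℕ) where
  ord : ℕ → List (ℕ × ℕ)
  pos : ℕ → ℕ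
  witT : ℕ × ℕ → Finset ℕ
  witC : ℕ × ℕ → Finset (ℕ × ℕ)
  mstar : ℕ × ℕ → ℕ
  ord_zero : ord 0 = []
  pos_le : ∀ l, pos l ≤ l
  ord_succ : ∀ l, ord (l + 1) = (ord l).take (pos l) ++ ent l :: (ord l).drop (pos l)
  /-- While moving the entry `ent l` forward through each intermediate position `q` with
  `pos l < q ≤ l`, the while loop did not break. -/
  moved : ∀ l q, pos l < q → q ≤ l →
    ∀ m, IsMchkN L ((ord l).take q) (ent l) m → m ≤ mstar ((ord l).getD (q - 1) (0, 0))
  /-- At the final position the while loop broke. -/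
  stopped : ∀ l, pos l = 0 ∨ mstar ((ord l).getD (pos l - 1) (0, 0)) < mstar (ent l)
  wit_spec : ∀ l,
    WitnessAtN L ((ord l).take (pos l)) (ent l) (witC (ent l)) (witT (ent l))
      (mstar (ent l))

/-- Claim B.1: the witness set is bounded. In every iteration of
Procedure 2 and at every position `q` reached by its while loop, the candidate witness
sets `T` considered in Step A have bounded size; in particular the noisy non-uniform
complexity `m*_n(L_i)` is finite (it is realized as a natural number `mstar (n, c)`). -/
theorem stmt_11 (L : ℕ → Set ℕ) (hL : ∀ i, (L i).Infinite) (R : Proc2Run L) :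
    ∀ l q, q ≤ l → ∃ B : ℕ,
      ∀ s T, ValidSubN L ((R.ord l).take q) (ent l) s T → T.card ≤ B := by
  classical
  intro l q _
  set pre := (R.ord l).take q with hpre
  set P : Finset (ℕ × ℕ) := insert (ent l) pre.toFinset with hP
  set f : Finset (ℕ × ℕ) → ℕ := fun u => (⋂ p ∈ u, L p.2).ncard + ∑ p ∈ u, p.1 with hf
  refine ⟨∑ u ∈ P.powerset, f u, ?_⟩
  rintro s T ⟨hlast, hsub, hcon, hfin⟩
  have hsP : s ∈ P.powerset := by
    rw [Finset.mem_powerset]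
    intro p hp
    rcases hsub p hp with h | h
    · simp [hP, h]
    · simp [hP, h]
  have hle : T.card ≤ f s := by
    rw [hf]
    set I := hfin.toFinset with hI
    have hTsub : T ⊆ I ∪ s.biUnion (fun p => T.filter (fun x => x ∉ L p.2)) := by
      intro x hx
      by_cases hxI : ∀ p ∈ s, x ∈ L p.2
      · apply Finset.mem_union_left
        rw [hI, Set.Finite.mem_toFinset]
        exact Set.mem_iInter₂.2 hxI
      · push_neg at hxI
        obtain ⟨p, hp, hxp⟩ := hxI
        exact Finset.mem_union_right _
          (Finset.mem_biUnion.2 ⟨p, hp, Finset.mem_filter.2 ⟨hx, hxp⟩⟩)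
    calc T.card ≤ (I ∪ s.biUnion (fun p => T.filter (fun x => x ∉ L p.2))).card :=
          Finset.card_le_card hTsub
      _ ≤ I.card + (s.biUnion (fun p => T.filter (fun x => x ∉ L p.2))).card :=
          Finset.card_union_le _ _
      _ ≤ I.card + ∑ p ∈ s, (T.filter (fun x => x ∉ L p.2)).card :=
          Nat.add_le_add_left (Finset.card_biUnion_le) _
      _ ≤ (⋂ p ∈ s, L p.2).ncard + ∑ p ∈ s, p.1 := by
          apply Nat.add_le_add
          · exact (Set.ncard_eq_toFinset_card _ hfin).ge
          · apply Finset.sum_le_sum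
            intro p hp
            have := hcon p hp
            unfold AContains at this
            refine le_trans (le_of_eq ?_) this
            rw [← Set.ncard_coe_finset]
            congr 1
            ext x
            simp [Set.mem_diff]
    -- done
  exact le_trans hle (Finset.single_le_sum (f := f) (fun _ _ => Nat.zero_le _) hsP)
end

section
/- Let C = (L_1, L_2, ...) be a countable collection of languages, let m*_n(L_i) be the noisy non-uniform complexities computed by Procedure 2, and let f : ℕ → ℕ be any non-decreasing function with f(t) → ∞ as t → ∞. Then there exists an algorithm G that noisily non-uniformly generates from C with times t_{n,G}(L_i) ≤ max(g(n, i), m*_n(L_i) + 1) for every noise level n ≥ 0 and index i ≥ 1, where g(n, i) is the smallest number j satisfying f(j) ≥ |diag(C_{n,i})|. -/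
/-- `x` is an enumeration of the language `Lang` at noise level `n`: every string of
`Lang` appears at some finite time, and at most `n` time steps carry a string outside
`Lang`. -/
def IsNoisyEnumOf (x : ℕ → ℕ) (Lang : Set ℕ) (n : ℕ) : Prop :=
  (∀ s ∈ Lang, ∃ t, x t = s) ∧
    {t : ℕ | x t ∉ Lang}.Finite ∧ {t : ℕ | x t ∉ Lang}.ncard ≤ n

/-- `G` noisily non-uniformly generates from the collection `L` with times
`tG n c` (noise level `n`, language `L c`). -/
def NoisyNonUniformGen (G : List ℕ → ℕ) (L : ℕ → Set ℕ) (tG : ℕ → ℕ → ℕ) : Prop :=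
  ∀ c n (x : ℕ → ℕ), IsNoisyEnumOf x (L c) n → ∀ t, 1 ≤ t → tG n c ≤ (Sfin x t).card →
    G (inputList x t) ∈ L c \ ↑(Sfin x t)

lemma ent_succ (l : ℕ) : ent (l + 1) = nextEnt (ent l) :=
  Function.iterate_succ_apply' nextEnt l (0, 0)

lemma gridIdx_succ_zero (c : ℕ) : gridIdx (c + 1) 0 = gridIdx 0 c + 1 := by
  have h : (c + 1) * (c + 1 + 1) = c * (c + 1) + 2 * (c + 1) := by ring
  simp only [gridIdx, Nat.add_zero, Nat.zero_add, h, Nat.add_mul_div_left _ _ two_pos]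
  omega

lemma gridIdx_succ_right (n c : ℕ) : gridIdx n (c + 1) = gridIdx (n + 1) c + 1 := by
  simp only [gridIdx, show n + (c + 1) = n + 1 + c by omega, Nat.add_assoc]

theorem ent_gridIdx (n c : ℕ) : ent (gridIdx n c) = (n, c) := by
  induction h : gridIdx n c generalizing n c with
  | zero =>
    match n, c with
    | 0, 0 => rfl
    | _ + 1, 0 => simp [gridIdx_succ_zero] at h
    | _, _ + 1 => simp [gridIdx_succ_right] at h
  | succ k ih =>
    match n, c with
    | 0, 0 => simp [gridIdx] at h
    | m + 1, 0 =>
      rw [ent_succ, ih 0 m (by simpa [gridIdx_succ_zero] using h)]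
      rfl
    | n, c + 1 =>
      rw [ent_succ, ih (n + 1) c (by simpa [gridIdx_succ_right] using h)]
      rfl

lemma gridIdx_injective : Function.Injective fun e : ℕ × ℕ => gridIdx e.1 e.2 :=
  Function.LeftInverse.injective (g := ent) fun e => ent_gridIdx e.1 e.2

lemma IsNoisyEnumOf.aContains_Sfin {x : ℕ → ℕ} {Lang : Set ℕ} {n : ℕ}
    (hx : IsNoisyEnumOf x Lang n) (t : ℕ) : AContains Lang n (Sfin x t) := by
  obtain ⟨-, hfin, hcard⟩ := hx
  have hsub : (↑(Sfin x t) : Set ℕ) \ Lang ⊆ x '' {t' | x t' ∉ Lang} := by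
    rintro y ⟨hy, hyL⟩
    obtain ⟨i, -, rfl⟩ := List.mem_map.mp (List.mem_toFinset.mp hy)
    exact ⟨i, hyL, rfl⟩
  calc ((↑(Sfin x t) : Set ℕ) \ Lang).ncard ≤ (x '' {t' | x t' ∉ Lang}).ncard :=
        Set.ncard_le_ncard hsub (hfin.image x)
    _ ≤ {t' | x t' ∉ Lang}.ncard := Set.ncard_image_le hfin
    _ ≤ n := hcard

section StepA

variable {L : ℕ → Set ℕ}

lemma card_le_of_aContains {s : Finset (ℕ × ℕ)} {T : Finset ℕ}
    (hT : ∀ p ∈ s, AContains (L p.2) p.1 T) (hfin : (⋂ p ∈ s, L p.2).Finite) :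
    T.card ≤ (⋂ p ∈ s, L p.2).ncard + ∑ p ∈ s, p.1 := by
  have hsub : (↑T : Set ℕ) ⊆ (⋂ p ∈ s, L p.2) ∪ ⋃ p ∈ s, (↑T \ L p.2) := by
    intro y hy
    by_cases hall : ∀ p ∈ s, y ∈ L p.2
    · exact Or.inl (Set.mem_iInter₂.mpr hall)
    · push Not at hall
      obtain ⟨p, hp, hyp⟩ := hall
      exact Or.inr (Set.mem_biUnion hp ⟨hy, hyp⟩)
  calc T.card = (↑T : Set ℕ).ncard := (Set.ncard_coe_finset T).symm
    _ ≤ ((⋂ p ∈ s, L p.2) ∪ ⋃ p ∈ s, (↑T \ L p.2)).ncard :=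
        Set.ncard_le_ncard hsub
          (hfin.union (s.finite_toSet.biUnion fun _ _ => T.finite_toSet.sdiff))
    _ ≤ (⋂ p ∈ s, L p.2).ncard + (⋃ p ∈ s, (↑T \ L p.2)).ncard := Set.ncard_union_le _ _
    _ ≤ (⋂ p ∈ s, L p.2).ncard + ∑ p ∈ s, (↑T \ L p.2).ncard := by
        gcongr; exact s.set_ncard_biUnion_le _
    _ ≤ (⋂ p ∈ s, L p.2).ncard + ∑ p ∈ s, p.1 := by
        gcongr with p hp; exact hT p hp

lemma exists_isMchkN (L : ℕ → Set ℕ) (pre : List (ℕ × ℕ)) (last : ℕ × ℕ) :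
    ∃ m, IsMchkN L pre last m := by
  by_cases hv : ∃ s T, ValidSubN L pre last s T
  swap
  · exact ⟨0, Or.inl ⟨hv, rfl⟩⟩
  set V : Set ℕ := {m | ∃ s T, ValidSubN L pre last s T ∧ T.card = m}
  have hVne : V.Nonempty := by
    obtain ⟨s, T, h⟩ := hv
    exact ⟨T.card, s, T, h, rfl⟩
  let bound : Finset (ℕ × ℕ) → ℕ := fun s => (⋂ p ∈ s, L p.2).ncard + ∑ p ∈ s, p.1
  have hVbdd : BddAbove V := by
    refine ⟨(insert last pre.toFinset).powerset.sup bound, ?_⟩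
    rintro _ ⟨s, T, ⟨-, hpre, hT, hfin⟩, rfl⟩
    have hs : s ∈ (insert last pre.toFinset).powerset := by
      refine Finset.mem_powerset.mpr fun p hp => ?_
      rcases hpre p hp with rfl | h
      · exact Finset.mem_insert_self _ _
      · exact Finset.mem_insert_of_mem (List.mem_toFinset.mpr h)
    exact (card_le_of_aContains hT hfin).trans (Finset.le_sup (f := bound) hs)
  obtain ⟨s, T, h, hcard⟩ := Nat.sSup_mem hVne hVbdd
  exact ⟨sSup V, Or.inr ⟨⟨s, T, h, hcard⟩, fun s T h => le_csSup hVbdd ⟨s, T, h, rfl⟩⟩⟩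

lemma IsMchkN.card_le {pre : List (ℕ × ℕ)} {last : ℕ × ℕ} {m : ℕ} {s : Finset (ℕ × ℕ)}
    {T : Finset ℕ} (hm : IsMchkN L pre last m) (h : ValidSubN L pre last s T) : T.card ≤ m := by
  rcases hm with ⟨hno, -⟩ | ⟨-, hmax⟩
  · exact absurd ⟨s, T, h⟩ hno
  · exact hmax s T h

lemma WitnessAtN.card_le {pre : List (ℕ × ℕ)} {last : ℕ × ℕ} {sC : Finset (ℕ × ℕ)}
    {sT : Finset ℕ} {m : ℕ} {s : Finset (ℕ × ℕ)} {T : Finset ℕ}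
    (hw : WitnessAtN L pre last sC sT m) (h : ValidSubN L pre last s T) : T.card ≤ m := by
  rcases hw with ⟨hno, -⟩ | ⟨-, -, hmax⟩
  · exact absurd ⟨s, T, h⟩ hno
  · exact hmax s T h

end StepA

lemma List.getD_eq_of_mem_take_add_one {α : Type*} {l : List α} {i : ℕ} {p d : α}
    (h : p ∈ l.take (i + 1)) (hi : p ∉ l.take i) : l.getD i d = p := by
  rw [List.take_add_one, List.mem_append] at h
  rcases h with h | h
  · exact absurd h hi
  · obtain ⟨v, hv, rfl⟩ : ∃ v, l[i]? = some v ∧ v = p := by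
      cases hl : l[i]? <;> simp_all
    simp [List.getD_eq_getElem?_getD, hv]

namespace Proc2Run

variable {L : ℕ → Set ℕ} (R : Proc2Run L)

lemma length_ord (l : ℕ) : (R.ord l).length = l := by
  induction l with
  | zero => simp [R.ord_zero]
  | succ l ih =>
    have := R.pos_le l
    simp only [R.ord_succ, List.length_append, List.length_take, List.length_cons,
      List.length_drop, ih]
    omega

lemma ent_mem_ord {l' l : ℕ} (h : l' < l) : ent l' ∈ R.ord l := by
  induction l with
  | zero => omega
  | succ l ih =>
    rw [R.ord_succ]
    rcases Nat.lt_succ_iff_lt_or_eq.mp h with h | rfl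
    · have := ih h
      rw [← List.take_append_drop (R.pos l) (R.ord l)] at this
      simp only [List.mem_append, List.mem_cons] at this ⊢
      tauto
    · simp

lemma card_le_mstar_of_validSubN_pos {l : ℕ} {s : Finset (ℕ × ℕ)} {T : Finset ℕ}
    (h : ValidSubN L ((R.ord l).take (R.pos l)) (ent l) s T) : T.card ≤ R.mstar (ent l) :=
  (R.wit_spec l).card_le h

lemma card_le_mstar_of_validSubN_of_pos_lt {l q : ℕ} {s : Finset (ℕ × ℕ)} {T : Finset ℕ}
    (hq : R.pos l < q) (hql : q ≤ l) (h : ValidSubN L ((R.ord l).take q) (ent l) s T) :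
    T.card ≤ R.mstar ((R.ord l).getD (q - 1) (0, 0)) :=
  have ⟨m, hm⟩ := exists_isMchkN L ((R.ord l).take q) (ent l)
  (hm.card_le h).trans (R.moved l q hq hql m hm)

theorem exists_card_le_mstar (l : ℕ) {D : Finset (ℕ × ℕ)} {T : Finset ℕ} (hl : ent l ∈ D)
    (hD : ∀ p ∈ D, p = ent l ∨ p ∈ R.ord l) (hT : ∀ p ∈ D, AContains (L p.2) p.1 T)
    (hfin : (⋂ p ∈ D, L p.2).Finite) : ∃ p ∈ D, T.card ≤ R.mstar p := by
  have hlen : ∀ p ∈ D, p = ent l ∨ p ∈ (R.ord l).take l := by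
    rwa [List.take_of_length_le (R.length_ord l).le]
  have hex : ∃ q, ∀ p ∈ D, p = ent l ∨ p ∈ (R.ord l).take q := ⟨l, hlen⟩
  have hvalid : ValidSubN L ((R.ord l).take (Nat.find hex)) (ent l) D T :=
    ⟨hl, Nat.find_spec hex, hT, hfin⟩
  rcases lt_or_ge (R.pos l) (Nat.find hex) with hpos | hpos
  · -- `ent l` was moved past position `Nat.find hex - 1`, which holds a member of `D`
    obtain ⟨q, hq⟩ : ∃ q, Nat.find hex = q + 1 := Nat.exists_eq_succ_of_ne_zero (by omega)
    have hmin := Nat.find_min hex (show q < Nat.find hex by omega)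
    push Not at hmin
    obtain ⟨p, hp, hpl, hpq⟩ := hmin
    have hpget : (R.ord l).getD q (0, 0) = p := by
      refine List.getD_eq_of_mem_take_add_one ?_ hpq
      rw [← hq]
      exact (Nat.find_spec hex p hp).resolve_left hpl
    refine ⟨p, hp, ?_⟩
    have hle := R.card_le_mstar_of_validSubN_of_pos_lt hpos (Nat.find_le hlen) hvalid
    rwa [hq, Nat.add_sub_cancel, hpget] at hle
  · refine ⟨ent l, hl, R.card_le_mstar_of_validSubN_pos ⟨hl, fun p hp => ?_, hT, hfin⟩⟩
    exact (Nat.find_spec hex p hp).imp_right (List.take_subset_take_left _ hpos ·)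

theorem iInter_infinite {D : Finset (ℕ × ℕ)} {T : Finset ℕ}
    (hT : ∀ p ∈ D, AContains (L p.2) p.1 T) (hm : ∀ p ∈ D, R.mstar p < T.card) :
    (⋂ p ∈ D, L p.2).Infinite := by
  intro hfin
  rcases D.eq_empty_or_nonempty with rfl | hne
  · simp only [Finset.notMem_empty, Set.iInter_of_empty, Set.iInter_univ] at hfin
    exact Set.infinite_univ hfin
  obtain ⟨e, he, hmax⟩ := D.exists_max_image (fun e => gridIdx e.1 e.2) hne
  have hD : ∀ p ∈ D, p = ent (gridIdx e.1 e.2) ∨ p ∈ R.ord (gridIdx e.1 e.2) := by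
    intro p hp
    rw [ent_gridIdx]
    rcases eq_or_ne p e with rfl | hpe
    · exact Or.inl rfl
    · have hlt := (hmax p hp).lt_of_ne (gridIdx_injective.ne hpe)
      simpa only [ent_gridIdx] using Or.inr (R.ent_mem_ord hlt)
  obtain ⟨p, hp, hle⟩ :=
    R.exists_card_le_mstar _ (by rwa [ent_gridIdx]) hD hT hfin
  exact (hm p hp).not_ge hle

end Proc2Run

section Generator

variable {L : ℕ → Set ℕ}

open Classical in
noncomputable def consistentEntries (R : Proc2Run L) (f : ℕ → ℕ) (S : Finset ℕ) :
    Finset (ℕ × ℕ) :=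
  ((Finset.range (f S.card)).image ent).filter
    fun e => AContains (L e.2) e.1 S ∧ R.mstar e < S.card

noncomputable def generator (R : Proc2Run L) (f : ℕ → ℕ) (w : List ℕ) : ℕ :=
  Classical.epsilon fun z => z ∈ (⋂ e ∈ consistentEntries R f w.toFinset, L e.2) \ ↑w.toFinset

lemma mem_consistentEntries {R : Proc2Run L} {f : ℕ → ℕ} {S : Finset ℕ} {n c : ℕ}
    (hf : gridIdx n c < f S.card) (hc : AContains (L c) n S) (hm : R.mstar (n, c) < S.card) :
    (n, c) ∈ consistentEntries R f S := by
  simp only [consistentEntries, Finset.mem_filter, Finset.mem_image, Finset.mem_range]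
  exact ⟨⟨gridIdx n c, hf, ent_gridIdx n c⟩, hc, hm⟩

theorem generator_mem {R : Proc2Run L} {f : ℕ → ℕ} {w : List ℕ} {e : ℕ × ℕ}
    (he : e ∈ consistentEntries R f w.toFinset) : generator R f w ∈ L e.2 \ ↑w.toFinset := by
  classical
  have hinf := R.iInter_infinite (D := consistentEntries R f w.toFinset)
    (fun p hp => (Finset.mem_filter.mp hp).2.1) (fun p hp => (Finset.mem_filter.mp hp).2.2)
  have hspec := Classical.epsilon_spec (hinf.sdiff w.toFinset.finite_toSet).nonempty
  exact ⟨Set.mem_iInter₂.mp hspec.1 e he, hspec.2⟩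

end Generator

lemma le_apply_of_sInf_le {f : ℕ → ℕ} (hf : Monotone f)
    (hftop : Filter.Tendsto f Filter.atTop Filter.atTop) {a k : ℕ}
    (hk : sInf {j | a ≤ f j} ≤ k) : a ≤ f k :=
  le_trans (Nat.sInf_mem (s := {j | a ≤ f j}) (hftop.eventually_ge_atTop a).exists) (hf hk)

theorem stmt_14_general (L : ℕ → Set ℕ) (R : Proc2Run L)
    (f : ℕ → ℕ) (hf : Monotone f)
    (hftop : Filter.Tendsto f Filter.atTop Filter.atTop) :
    ∃ (G : List ℕ → ℕ) (tG : ℕ → ℕ → ℕ), NoisyNonUniformGen G L tG ∧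
      ∀ n c, tG n c ≤ max (sInf {j : ℕ | gridIdx n c + 1 ≤ f j}) (R.mstar (n, c) + 1) := by
  refine ⟨generator R f, fun n c => max (sInf {j | gridIdx n c + 1 ≤ f j}) (R.mstar (n, c) + 1),
    ?_, fun _ _ => le_rfl⟩
  intro c n x hx t _ ht
  rw [max_le_iff] at ht
  exact generator_mem (mem_consistentEntries (le_apply_of_sInf_le hf hftop ht.1)
    (hx.aContains_Sfin t) ht.2)

/-- Theorem 4.2: noisy generation times. For any non-decreasing
`f : ℕ → ℕ` tending to infinity there is an algorithm noisily non-uniformly generating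
from `L` with times `t*_n(L_i) ≤ max (g n c) (m*_n(L_i) + 1)`, where `g n c` is the
smallest `j` with `f j ≥ |diag(C_{n, c+1})| = gridIdx n c + 1`. -/
theorem stmt_14 (L : ℕ → Set ℕ) (hL : ∀ i, (L i).Infinite) (R : Proc2Run L)
    (f : ℕ → ℕ) (hf : Monotone f)
    (hftop : Filter.Tendsto f Filter.atTop Filter.atTop) :
    ∃ (G : List ℕ → ℕ) (tG : ℕ → ℕ → ℕ), NoisyNonUniformGen G L tG ∧
      ∀ n c, tG n c ≤ max (sInf {j : ℕ | gridIdx n c + 1 ≤ f j}) (R.mstar (n, c) + 1) :=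
  stmt_14_general L R f hf hftop
end

section
/- Fix α ∈ (0, 1] and a finite partition A = {A_g}_{g ∈ [K]} of the universe U into K groups. Let C = (L_1, L_2, ...) be a countable collection of languages and run Procedure 3 on it. Then in every iteration, the candidate witness set T considered in Step i of the while loop of Procedure 3 has bounded size; in particular, the representative non-uniform complexity m*_α(L_i) is finite for every i ≥ 1. -/
open scoped Classical

/-- The group distribution induced by the uniform (empirical) distribution on the
finite set `T`: `empA A T g = |T ∩ A_g| / |T|`. -/
noncomputable def empA {K : ℕ} (A : Fin K → Set ℕ) (T : Finset ℕ) (g : Fin K) : ℝ :=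
  (((↑T : Set ℕ) ∩ A g).ncard : ℝ) / (T.card : ℝ)

/-- The scarce groups in the partition `A` with respect to the subcollection `C'` (a
finite set of language indices) and the finite set `T`:
`B = {g : A_g ∩ ((⋂_{i ∈ C'} L i) \ T) = ∅}`. -/
noncomputable def scarceGroups {K : ℕ} (A : Fin K → Set ℕ) (L : ℕ → Set ℕ)
    (C' : Finset ℕ) (T : Finset ℕ) : Finset (Fin K) :=
  Finset.univ.filter fun g => A g ∩ ((⋂ i ∈ C', L i) \ ↑T) = ∅

/-- `T` suffers group scarcity with respect to `C'` and the partition `A`: either some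
scarce group `g` has `emp_T^A(g) > α`, or `Σ_{g ∈ B} emp_T^A(g) > α ⬝ (K - |B|)`. -/
def SuffersScarcity {K : ℕ} (A : Fin K → Set ℕ) (α : ℝ) (L : ℕ → Set ℕ)
    (C' : Finset ℕ) (T : Finset ℕ) : Prop :=
  (∃ g ∈ scarceGroups A L C' T, α < empA A T g) ∨
    α * ((K : ℝ) - ((scarceGroups A L C' T).card : ℝ)) <
      ∑ g ∈ scarceGroups A L C' T, empA A T g

/-- A valid pair `(s, T)` for Step i of the while loop of Procedure 3: `s` is a
subcollection (of indices drawn from the prefix `pre` or equal to `last`) containing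
`last`, every language of `s` contains `T`, and `T` suffers group scarcity with respect
to `s` and `A`. -/
def ValidSubR {K : ℕ} (A : Fin K → Set ℕ) (α : ℝ) (L : ℕ → Set ℕ)
    (pre : List ℕ) (last : ℕ) (s : Finset ℕ) (T : Finset ℕ) : Prop :=
  last ∈ s ∧ (∀ k ∈ s, k = last ∨ k ∈ pre) ∧
    (∀ k ∈ s, (↑T : Set ℕ) ⊆ L k) ∧ SuffersScarcity A α L s T

/-- `m` is the value `m_chk` of Step i of Procedure 3: the largest size of a valid
witness set `T` (and `0` if none exists). -/
def IsMchkR {K : ℕ} (A : Fin K → Set ℕ) (α : ℝ) (L : ℕ → Set ℕ)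
    (pre : List ℕ) (last : ℕ) (m : ℕ) : Prop :=
  ((¬ ∃ s T, ValidSubR A α L pre last s T) ∧ m = 0) ∨
    ((∃ s T, ValidSubR A α L pre last s T ∧ T.card = m) ∧
      ∀ s T, ValidSubR A α L pre last s T → T.card ≤ m)

/-- `(sC, sT)` witness `m = m_chk` in Step i of Procedure 3 (everything empty, `m = 0`
if no valid pair exists). -/
def WitnessAtR {K : ℕ} (A : Fin K → Set ℕ) (α : ℝ) (L : ℕ → Set ℕ)
    (pre : List ℕ) (last : ℕ) (sC : Finset ℕ) (sT : Finset ℕ) (m : ℕ) : Prop :=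
  ((¬ ∃ s T, ValidSubR A α L pre last s T) ∧ sC = ∅ ∧ sT = ∅ ∧ m = 0) ∨
    (ValidSubR A α L pre last sC sT ∧ sT.card = m ∧
      ∀ s T, ValidSubR A α L pre last s T → T.card ≤ m)

/-- A run of Procedure 3 (insertion sort for representative non-uniform generation) on
the collection `L 0, L 1, ...` (0-based: `L i` is the paper's `L_{i+1}`). `ord i` is the
maintained ordering `C'_i`, `pos i` the (0-based) final insertion position of language
`i` in iteration `i`, and `witT i`, `witC i`, `mstar i` are `T(L_i)`, `C(L_i)` and the
representative non-uniform complexity `m*_α(L_i)`. -/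
structure Proc3Run {K : ℕ} (A : Fin K → Set ℕ) (α : ℝ) (L : ℕ → Set ℕ) where
  ord : ℕ → List ℕ
  pos : ℕ → ℕ
  witT : ℕ → Finset ℕ
  witC : ℕ → Finset ℕ
  mstar : ℕ → ℕ
  ord_zero : ord 0 = []
  pos_le : ∀ i, pos i ≤ i
  ord_succ : ∀ i, ord (i + 1) = (ord i).take (pos i) ++ i :: (ord i).drop (pos i)
  /-- While moving language `i` forward through each intermediate position `q` with
  `pos i < q ≤ i`, the while loop did not break. -/
  moved : ∀ i q, pos i < q → q ≤ i →
    ∀ m, IsMchkR A α L ((ord i).take q) i m → m ≤ mstar ((ord i).getD (q - 1) 0)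
  /-- At the final position the while loop broke. -/
  stopped : ∀ i, pos i = 0 ∨ mstar ((ord i).getD (pos i - 1) 0) < mstar i
  wit_spec : ∀ i, WitnessAtR A α L ((ord i).take (pos i)) i (witC i) (witT i) (mstar i)

/-- Key bound: any valid witness set `T` for a fixed subcollection `s` has size at most
`⌈(∑_g |A_g ∩ ⋂_{k∈s} L_k|)/α⌉`. -/
theorem key_bound {K : ℕ} (A : Fin K → Set ℕ) (α : ℝ) (hα0 : 0 < α) (hα1 : α ≤ 1)
    (hcover : (⋃ g, A g) = Set.univ) (L : ℕ → Set ℕ)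
    (s T : Finset ℕ) (hs : s.Nonempty)
    (hsub : ∀ k ∈ s, (↑T : Set ℕ) ⊆ L k)
    (hsc : SuffersScarcity A α L s T) :
    T.card ≤ Nat.ceil ((∑ g : Fin K, ((A g ∩ ⋂ k ∈ s, L k).ncard : ℝ)) / α) := by
  set I : Set ℕ := ⋂ k ∈ s, L k with hI
  set c : ℝ := ∑ g : Fin K, ((A g ∩ I).ncard : ℝ) with hc
  have hTI : (↑T : Set ℕ) ⊆ I := Set.subset_iInter₂ hsub
  have hcnn : 0 ≤ c := Finset.sum_nonneg fun g _ => Nat.cast_nonneg _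
  have hscarce : ∀ g ∈ scarceGroups A L s T,
      ((↑T : Set ℕ) ∩ A g).ncard ≤ (A g ∩ I).ncard := by
    intro g hg
    simp only [scarceGroups, Finset.mem_filter] at hg
    have hsubT : A g ∩ I ⊆ (↑T : Set ℕ) := by
      rintro x ⟨hxA, hxI⟩
      by_contra hxT
      have hmem : x ∈ A g ∩ (I \ (↑T : Set ℕ)) := ⟨hxA, hxI, hxT⟩
      rw [hg.2] at hmem
      exact hmem
    have hfin : (A g ∩ I).Finite := T.finite_toSet.subset hsubT
    refine Set.ncard_le_ncard ?_ hfin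
    rintro x ⟨hxT, hxA⟩
    exact ⟨hxA, hTI hxT⟩
  have hterm : ∀ g ∈ scarceGroups A L s T,
      ((((↑T : Set ℕ) ∩ A g).ncard : ℝ)) ≤ c := by
    intro g hg
    calc ((((↑T : Set ℕ) ∩ A g).ncard : ℝ)) ≤ ((A g ∩ I).ncard : ℝ) := by
          exact_mod_cast hscarce g hg
      _ ≤ c := Finset.single_le_sum (f := fun g => ((A g ∩ I).ncard : ℝ))
          (fun g _ => Nat.cast_nonneg _) (Finset.mem_univ g)
  rcases Nat.eq_zero_or_pos T.card with hT0 | hTpos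
  · simp [hT0]
  have hTpos' : (0 : ℝ) < T.card := by exact_mod_cast hTpos
  have hceil_of_lt : (T.card : ℝ) < c / α → T.card ≤ Nat.ceil (c / α) :=
    fun h => le_of_lt (Nat.lt_ceil.mpr h)
  rcases hsc with ⟨g, hg, hα⟩ | hsum
  · -- single scarce group exceeds α
    apply hceil_of_lt
    rw [lt_div_iff₀ hα0]
    have h1 : α * (T.card : ℝ) < ((((↑T : Set ℕ) ∩ A g).ncard : ℝ)) := by
      unfold empA at hα
      calc α * (T.card : ℝ)
          < ((((↑T : Set ℕ) ∩ A g).ncard : ℝ)) / (T.card : ℝ) * (T.card : ℝ) :=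
            mul_lt_mul_of_pos_right hα hTpos'
        _ = _ := by field_simp
    calc (T.card : ℝ) * α = α * (T.card : ℝ) := mul_comm _ _
      _ < _ := h1
      _ ≤ c := hterm g hg
  · by_cases hK : (scarceGroups A L s T).card = K
    · -- all groups are scarce: T is exactly the (finite) intersection
      have huniv : scarceGroups A L s T = Finset.univ :=
        Finset.eq_univ_of_card _ (by simpa using hK)
      have hfilter : ∀ g : Fin K,
          ((T.filter (fun x => x ∈ A g)).card : ℝ) = (((↑T : Set ℕ) ∩ A g).ncard : ℝ) := by
        intro g
        have : ((T.filter (fun x => x ∈ A g) : Finset ℕ) : Set ℕ) = (↑T : Set ℕ) ∩ A g := by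
          ext x; simp [Finset.mem_filter]
        rw [← this, Set.ncard_coe_finset]
      have hTsub : T ⊆ Finset.univ.biUnion (fun g : Fin K => T.filter (fun x => x ∈ A g)) := by
        intro x hx
        have : x ∈ ⋃ g, A g := by rw [hcover]; trivial
        rcases Set.mem_iUnion.mp this with ⟨g, hgx⟩
        exact Finset.mem_biUnion.mpr ⟨g, Finset.mem_univ g, Finset.mem_filter.mpr ⟨hx, hgx⟩⟩
      have hTsum : (T.card : ℝ) ≤ ∑ g : Fin K, ((((↑T : Set ℕ) ∩ A g).ncard : ℝ)) := by
        have h1 : T.card ≤ ∑ g : Fin K, (T.filter (fun x => x ∈ A g)).card :=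
          le_trans (Finset.card_le_card hTsub) (Finset.card_biUnion_le)
        have h2 : ((∑ g : Fin K, (T.filter (fun x => x ∈ A g)).card : ℕ) : ℝ)
            = ∑ g : Fin K, ((((↑T : Set ℕ) ∩ A g).ncard : ℝ)) := by
          push_cast
          exact Finset.sum_congr rfl fun g _ => hfilter g
        calc (T.card : ℝ) ≤ ((∑ g : Fin K, (T.filter (fun x => x ∈ A g)).card : ℕ) : ℝ) := by
              exact_mod_cast h1
          _ = _ := h2
      have hTc : (T.card : ℝ) ≤ c := by
        refine le_trans hTsum (Finset.sum_le_sum fun g _ => ?_)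
        exact_mod_cast hscarce g (huniv ▸ Finset.mem_univ g)
      have hcα : c ≤ c / α := by
        rw [le_div_iff₀ hα0]
        calc c * α ≤ c * 1 := mul_le_mul_of_nonneg_left hα1 hcnn
          _ = c := mul_one c
      have : (T.card : ℝ) ≤ (Nat.ceil (c / α) : ℝ) :=
        le_trans (le_trans hTc hcα) (Nat.le_ceil _)
      exact_mod_cast this
    · -- at least one group is not scarce
      apply hceil_of_lt
      rw [lt_div_iff₀ hα0]
      set B := scarceGroups A L s T with hB
      have hBlt : B.card < K := lt_of_le_of_ne (by simpa using Finset.card_le_univ B) hK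
      have h1K : (1 : ℝ) ≤ (K : ℝ) - (B.card : ℝ) := by
        have : (B.card : ℝ) + 1 ≤ (K : ℝ) := by exact_mod_cast hBlt
        linarith
      have hαle : α ≤ α * ((K : ℝ) - (B.card : ℝ)) :=
        le_mul_of_one_le_right hα0.le h1K
      have hsum2 : ∑ g ∈ B, empA A T g ≤ c / (T.card : ℝ) := by
        have hle : ∀ g ∈ B, empA A T g ≤ (((A g ∩ I).ncard : ℝ)) / (T.card : ℝ) := by
          intro g hg
          unfold empA
          apply div_le_div_of_nonneg_right ?_ hTpos'.le
          · exact_mod_cast hscarce g hg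
        calc ∑ g ∈ B, empA A T g
            ≤ ∑ g ∈ B, (((A g ∩ I).ncard : ℝ)) / (T.card : ℝ) := Finset.sum_le_sum hle
          _ = (∑ g ∈ B, (((A g ∩ I).ncard : ℝ))) / (T.card : ℝ) := by
              rw [Finset.sum_div]
          _ ≤ c / (T.card : ℝ) := by
              apply div_le_div_of_nonneg_right ?_ hTpos'.le
              exact Finset.sum_le_sum_of_subset_of_nonneg (Finset.subset_univ B)
                (fun g _ _ => Nat.cast_nonneg _)
      have hαlt : α < c / (T.card : ℝ) := lt_of_le_of_lt hαle (lt_of_lt_of_le hsum hsum2)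
      calc (T.card : ℝ) * α = α * (T.card : ℝ) := mul_comm _ _
        _ < c := by
          have := (lt_div_iff₀ hTpos').mp hαlt
          linarith

/-- Claim C.1: the witness set is bounded. Fix `α ∈ (0, 1]` and a
finite partition `A` of the universe into `K` groups. In every iteration of Procedure 3
and at every position `q` reached by its while loop, the candidate witness sets `T`
considered in Step i have bounded size; in particular the representative non-uniform
complexity `m*_α(L_i)` is finite (it is realized as a natural number `mstar i`). -/
theorem stmt_16 {K : ℕ} (A : Fin K → Set ℕ) (α : ℝ) (hα0 : 0 < α) (hα1 : α ≤ 1)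
    (hdisj : ∀ g g', g ≠ g' → Disjoint (A g) (A g')) (hcover : (⋃ g, A g) = Set.univ)
    (L : ℕ → Set ℕ) (hL : ∀ i, (L i).Infinite) (R : Proc3Run A α L) :
    ∀ i q, q ≤ i → ∃ B : ℕ,
      ∀ s T, ValidSubR A α L ((R.ord i).take q) i s T → T.card ≤ B := by
  intro i q _
  set pre : List ℕ := (R.ord i).take q with hpre
  refine ⟨((insert i pre.toFinset).powerset).sup
    (fun s => Nat.ceil ((∑ g : Fin K, ((A g ∩ ⋂ k ∈ s, L k).ncard : ℝ)) / α)), ?_⟩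
  intro s T hv
  obtain ⟨hlast, hmem, hsub, hsc⟩ := hv
  have hsP : s ∈ (insert i pre.toFinset).powerset := by
    refine Finset.mem_powerset.mpr fun k hk => ?_
    rcases hmem k hk with h | h
    · subst h; exact Finset.mem_insert_self k _
    · exact Finset.mem_insert_of_mem (List.mem_toFinset.mpr h)
  exact le_trans
    (key_bound A α hα0 hα1 hcover L s T ⟨i, hlast⟩ hsub hsc)
    (Finset.le_sup (f := fun s =>
      Nat.ceil ((∑ g : Fin K, ((A g ∩ ⋂ k ∈ s, L k).ncard : ℝ)) / α)) hsP)
end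

section
/- Fix α ∈ (0, 1] and a finite partition A = {A_g}_{g ∈ [K]} of the universe U into K groups. Let C = (L_1, L_2, ...) be a countable collection of languages, let m*_α(L_i) be the representative non-uniform complexities computed by Procedure 3, and let f : ℕ → ℕ be any non-decreasing function with f(t) → ∞ as t → ∞. Then there exists a representative generating algorithm G that generates non-uniformly with α-representation from C with times t_{α,G}(L_i) ≤ max(g(i), m*_α(L_i) + 1) for every i, where g(i) is the smallest number j for which f(j) ≥ i. -/
open scoped Classical

/-- `p` is a probability distribution on the universe `ℕ`. -/
def IsDist (p : ℕ → ℝ) : Prop := (∀ x, 0 ≤ p x) ∧ ∑' x, p x = 1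

/-- The probability mass a distribution `p` places on the set `S`. -/
noncomputable def prMass (p : ℕ → ℝ) (S : Set ℕ) : ℝ := ∑' x, S.indicator p x

/-- A representative generating algorithm `G` (outputting a distribution over strings
after each input prefix) generates non-uniformly with `α`-representation from the
collection `L`, with times `tG`: it always outputs distributions; on any enumeration of
any `L i` its output group distribution is within `α` of the empirical group
distribution (in sup-norm) at every time `t ≥ 1`; and whenever `|S_t| ≥ tG i` its
output distribution is supported on `L i \ S_t`. -/
def RepNonUniformGen {K : ℕ} (A : Fin K → Set ℕ) (α : ℝ)
    (G : List ℕ → ℕ → ℝ) (L : ℕ → Set ℕ) (tG : ℕ → ℕ) : Prop :=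
  (∀ inp : List ℕ, IsDist (G inp)) ∧
    ∀ i (x : ℕ → ℕ), IsEnumOf x (L i) →
      (∀ t, 1 ≤ t →
        ∀ g, |empA A (Sfin x t) g - prMass (G (inputList x t)) (A g)| ≤ α) ∧
      (∀ t, 1 ≤ t → tG i ≤ (Sfin x t).card →
        prMass (G (inputList x t)) (L i \ ↑(Sfin x t)) = 1)

/-!
On input set `S`, call `L i` active if `i < f |S|`, `S ⊆ L i` and
`max (g i) (m*_α(L_i) + 1) ≤ |S|`. If no language is active, output the empirical
distribution of `S`. Otherwise `S` does not suffer group scarcity with respect to the finite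
collection `I` of active languages: the insertion sort of Procedure 3 maintains that every
witness for the language at position `q` of the ordering, relative to its prefix, has size at
most its `m*_α`, and the active language placed last has all of `I` in its prefix, so
scarcity would give `|S| ≤ m*_α < |S|`. Without scarcity every non-scarce group has a fresh
string in `⋂ I \ S`; moving the empirical mass of the scarce groups evenly onto these strings
gives an `α`-representative distribution supported in each `L i \ S` with `i` active.
-/

lemma mem_group_iff_eq {ι X : Type*} {A : ι → Set X}
    (hdisj : ∀ g g', g ≠ g' → Disjoint (A g) (A g')) {x : X} {g₀ : ι} (hx : x ∈ A g₀) (g : ι) :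
    x ∈ A g ↔ g = g₀ :=
  ⟨fun hg => by_contra fun hne => Set.disjoint_left.mp (hdisj g g₀ hne) hg hx, fun h => h ▸ hx⟩

section Partition

variable {K : ℕ} {A : Fin K → Set ℕ}

lemma ncard_coe_inter_eq_card_filter (T : Finset ℕ) (g : Fin K) :
    ((↑T : Set ℕ) ∩ A g).ncard = (T.filter (· ∈ A g)).card := by
  rw [← Set.ncard_coe_finset, Finset.coe_filter]
  rfl

lemma sum_ncard_coe_inter_eq_card (hdisj : ∀ g g', g ≠ g' → Disjoint (A g) (A g'))
    (hcover : (⋃ g, A g) = Set.univ) (T : Finset ℕ) :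
    ∑ g, ((↑T : Set ℕ) ∩ A g).ncard = T.card := by
  choose grp hgrp using fun x => Set.mem_iUnion.mp (hcover ▸ Set.mem_univ x : x ∈ ⋃ g, A g)
  rw [Finset.card_eq_sum_card_fiberwise (f := grp) (t := Finset.univ) fun _ _ => by simp]
  refine Finset.sum_congr rfl fun g _ => ?_
  simp_rw [ncard_coe_inter_eq_card_filter, mem_group_iff_eq hdisj (hgrp _), eq_comm]

lemma empA_nonneg (A : Fin K → Set ℕ) (T : Finset ℕ) (g : Fin K) : 0 ≤ empA A T g := by
  unfold empA; positivity

lemma sum_empA_eq_one (hdisj : ∀ g g', g ≠ g' → Disjoint (A g) (A g'))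
    (hcover : (⋃ g, A g) = Set.univ) {T : Finset ℕ} (hT : T.Nonempty) :
    ∑ g, empA A T g = 1 := by
  have hT0 : (T.card : ℝ) ≠ 0 := by exact_mod_cast hT.card_pos.ne'
  simp only [empA]
  rw [← Finset.sum_div, div_eq_one_iff_eq hT0]
  exact_mod_cast sum_ncard_coe_inter_eq_card hdisj hcover T

end Partition

noncomputable def sumDirac {ι : Type*} (F : Finset ι) (y : ι → ℕ) (w : ι → ℝ) : ℕ → ℝ :=
  fun n => ∑ j ∈ F, if n = y j then w j else 0

section SumDirac

variable {ι : Type*} (F : Finset ι) (y : ι → ℕ) (w : ι → ℝ)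

lemma isDist_sumDirac (hw : ∀ j ∈ F, 0 ≤ w j) (hsum : ∑ j ∈ F, w j = 1) :
    IsDist (sumDirac F y w) := by
  refine ⟨fun n => Finset.sum_nonneg fun j hj => ?_, ?_⟩
  · split_ifs <;> simp [hw j hj]
  · unfold sumDirac
    rw [Summable.tsum_finsetSum fun j _ => (hasSum_ite_eq (y j) (w j)).summable]
    simpa only [tsum_ite_eq] using hsum

lemma prMass_sumDirac (S : Set ℕ) :
    prMass (sumDirac F y w) S = ∑ j ∈ F, if y j ∈ S then w j else 0 := by
  have hind : S.indicator (sumDirac F y w) =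
      fun n => ∑ j ∈ F, if n = y j then (if y j ∈ S then w j else 0) else 0 := by
    ext n
    by_cases hn : n ∈ S
    · simp only [Set.indicator_of_mem hn, sumDirac]
      exact Finset.sum_congr rfl fun j _ => by split_ifs <;> simp_all
    · simp only [Set.indicator_of_notMem hn]
      exact (Finset.sum_eq_zero fun j _ => by split_ifs <;> simp_all).symm
  rw [prMass, hind, Summable.tsum_finsetSum fun j _ =>
    (hasSum_ite_eq (y j) (if y j ∈ S then w j else 0)).summable]
  simp only [tsum_ite_eq]

end SumDirac

section PartitionMass

variable {K : ℕ} {A : Fin K → Set ℕ}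

lemma prMass_sumDirac_group (hdisj : ∀ g g', g ≠ g' → Disjoint (A g) (A g'))
    (F : Finset (Fin K)) (y : Fin K → ℕ) (w : Fin K → ℝ) (hy : ∀ j ∈ F, y j ∈ A j)
    (g : Fin K) :
    prMass (sumDirac F y w) (A g) = if g ∈ F then w g else 0 := by
  rw [prMass_sumDirac, ← Finset.sum_ite_eq F g w]
  exact Finset.sum_congr rfl fun j hj => if_congr (mem_group_iff_eq hdisj (hy j hj) g) rfl rfl

lemma prMass_sumDirac_uniform (T : Finset ℕ) (g : Fin K) :
    prMass (sumDirac T id fun _ => (T.card : ℝ)⁻¹) (A g) = empA A T g := by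
  rw [prMass_sumDirac, ← Finset.sum_filter, Finset.sum_const, nsmul_eq_mul, empA,
    ncard_coe_inter_eq_card_filter, div_eq_mul_inv]
  rfl

end PartitionMass

section Scarcity

variable {K : ℕ} {A : Fin K → Set ℕ} {α : ℝ} {L : ℕ → Set ℕ}

lemma inter_iInter_eq_of_mem_scarceGroups {C T : Finset ℕ} {g : Fin K}
    (hg : g ∈ scarceGroups A L C T) (hT : (↑T : Set ℕ) ⊆ ⋂ i ∈ C, L i) :
    A g ∩ ⋂ i ∈ C, L i = ↑T ∩ A g := by
  have hempty : A g ∩ ((⋂ i ∈ C, L i) \ ↑T) = ∅ := (Finset.mem_filter.mp hg).2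
  ext x
  constructor
  · rintro ⟨hxg, hxC⟩
    by_contra hxT
    exact (Set.eq_empty_iff_forall_notMem.mp hempty) x ⟨hxg, hxC, fun h => hxT ⟨h, hxg⟩⟩
  · rintro ⟨hxT, hxg⟩
    exact ⟨hxg, hT hxT⟩

lemma SuffersScarcity.mul_card_le_sum (hα0 : 0 ≤ α) (hα1 : α ≤ 1)
    (hdisj : ∀ g g', g ≠ g' → Disjoint (A g) (A g')) (hcover : (⋃ g, A g) = Set.univ)
    {C T : Finset ℕ} (h : SuffersScarcity A α L C T) :
    α * T.card ≤ ∑ g ∈ scarceGroups A L C T, (((↑T : Set ℕ) ∩ A g).ncard : ℝ) := by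
  set B := scarceGroups A L C T
  rcases T.eq_empty_or_nonempty with rfl | hT
  · simp
  have hT0 : (T.card : ℝ) ≠ 0 := by exact_mod_cast hT.card_pos.ne'
  have hemp : ∀ g, empA A T g * T.card = (((↑T : Set ℕ) ∩ A g).ncard : ℝ) :=
    fun g => div_mul_cancel₀ _ hT0
  rcases h with ⟨g, hg, hlt⟩ | hlt
  · calc α * T.card ≤ empA A T g * T.card := by gcongr
      _ = (((↑T : Set ℕ) ∩ A g).ncard : ℝ) := hemp g
      _ ≤ _ := Finset.single_le_sum (f := fun g => (((↑T : Set ℕ) ∩ A g).ncard : ℝ))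
          (fun g _ => by positivity) hg
  have hsum : (∑ g ∈ B, empA A T g) * T.card =
      ∑ g ∈ B, (((↑T : Set ℕ) ∩ A g).ncard : ℝ) := by
    rw [Finset.sum_mul]; simp only [hemp]
  rcases (Finset.card_le_univ B).lt_or_eq with hB | hB
  · rw [Fintype.card_fin] at hB
    have hKB : (1 : ℝ) ≤ K - B.card := by
      have : (B.card : ℝ) + 1 ≤ K := by exact_mod_cast hB
      linarith
    calc α * T.card ≤ α * (K - B.card) * T.card := by
          gcongr; exact le_mul_of_one_le_right hα0 hKB
      _ ≤ (∑ g ∈ B, empA A T g) * T.card := by gcongr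
      _ = _ := hsum
  · rw [Finset.eq_univ_of_card B hB]
    have := sum_ncard_coe_inter_eq_card hdisj hcover T
    calc α * T.card ≤ T.card := mul_le_of_le_one_left (by positivity) hα1
      _ = _ := by exact_mod_cast this.symm

noncomputable def scarcityBound (A : Fin K → Set ℕ) (L : ℕ → Set ℕ) (C : Finset ℕ) : ℕ :=
  ∑ g, (A g ∩ ⋂ i ∈ C, L i).ncard

lemma ValidSubR.mul_card_le_scarcityBound (hα0 : 0 ≤ α) (hα1 : α ≤ 1)
    (hdisj : ∀ g g', g ≠ g' → Disjoint (A g) (A g')) (hcover : (⋃ g, A g) = Set.univ)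
    {pre : List ℕ} {last : ℕ} {s T : Finset ℕ} (h : ValidSubR A α L pre last s T) :
    α * T.card ≤ scarcityBound A L s := by
  have hT : (↑T : Set ℕ) ⊆ ⋂ i ∈ s, L i := Set.subset_iInter₂ h.2.2.1
  refine (h.2.2.2.mul_card_le_sum hα0 hα1 hdisj hcover).trans ?_
  rw [scarcityBound, Nat.cast_sum]
  calc ∑ g ∈ scarceGroups A L s T, (((↑T : Set ℕ) ∩ A g).ncard : ℝ)
      = ∑ g ∈ scarceGroups A L s T, ((A g ∩ ⋂ i ∈ s, L i).ncard : ℝ) :=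
        Finset.sum_congr rfl fun g hg => by rw [inter_iInter_eq_of_mem_scarceGroups hg hT]
    _ ≤ _ := Finset.sum_le_sum_of_subset_of_nonneg (Finset.subset_univ _)
        fun _ _ _ => by positivity

lemma exists_isMchkR (hα0 : 0 < α) (hα1 : α ≤ 1)
    (hdisj : ∀ g g', g ≠ g' → Disjoint (A g) (A g')) (hcover : (⋃ g, A g) = Set.univ)
    (pre : List ℕ) (last : ℕ) : ∃ m, IsMchkR A α L pre last m := by
  by_cases h : ∃ s T, ValidSubR A α L pre last s T
  swap
  · exact ⟨0, Or.inl ⟨h, rfl⟩⟩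
  set sizes := {n | ∃ s T, ValidSubR A α L pre last s T ∧ T.card = n}
  set bound : Finset ℕ → ℕ := fun s => ⌊(scarcityBound A L s : ℝ) / α⌋₊
  have hbdd : BddAbove sizes := by
    refine ⟨(insert last pre.toFinset).powerset.sup bound, ?_⟩
    rintro _ ⟨s, T, hv, rfl⟩
    have hs : s ∈ (insert last pre.toFinset).powerset := Finset.mem_powerset.mpr fun k hk => by
      rcases hv.2.1 k hk with rfl | hk <;> simp [*]
    refine le_trans ?_ (Finset.le_sup (f := bound) hs)
    refine Nat.le_floor ((le_div_iff₀ hα0).mpr ?_)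
    rw [mul_comm]
    exact hv.mul_card_le_scarcityBound hα0.le hα1 hdisj hcover
  obtain ⟨s, T, hv⟩ := h
  have hne : sizes.Nonempty := ⟨T.card, s, T, hv, rfl⟩
  exact ⟨sSup sizes, Or.inr ⟨Nat.sSup_mem hne hbdd,
    fun s T hv => le_csSup hbdd ⟨s, T, hv, rfl⟩⟩⟩

end Scarcity

namespace List

variable {β : Type*}

lemma insertIdx_eq_take_append_cons_drop (l : List β) (a : β) {p : ℕ} (hp : p ≤ l.length) :
    l.insertIdx p a = l.take p ++ a :: l.drop p := by
  induction l generalizing p with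
  | nil => simp_all
  | cons b l ih => cases p <;> simp_all [insertIdx_succ_cons]

lemma take_insertIdx_of_lt (l : List β) (a : β) {p q : ℕ} (hpq : p < q) :
    (l.insertIdx p a).take q = (l.take (q - 1)).insertIdx p a :=
  ext_getElem (by grind) (by grind)

end List

section Procedure

variable {K : ℕ} {A : Fin K → Set ℕ} {α : ℝ} {L : ℕ → Set ℕ}

lemma ValidSubR.of_mem_prefix {pre pre' : List ℕ} {last last' : ℕ} {s T : Finset ℕ}
    (h : ValidSubR A α L pre last s T) (hlast' : last' ∈ s)
    (hs : ∀ k ∈ s, k = last ∨ k ∈ pre → k = last' ∨ k ∈ pre') :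
    ValidSubR A α L pre' last' s T :=
  ⟨hlast', fun k hk => hs k hk (h.2.1 k hk), h.2.2⟩

namespace Proc3Run

variable (R : Proc3Run A α L)

lemma length_ord (N : ℕ) : (R.ord N).length = N := by
  induction N with
  | zero => simp [R.ord_zero]
  | succ n ih =>
    have := R.pos_le n
    simp only [R.ord_succ, List.length_append, List.length_take, List.length_cons,
      List.length_drop, ih]
    omega

lemma ord_succ_eq_insertIdx (n : ℕ) : R.ord (n + 1) = (R.ord n).insertIdx (R.pos n) n := by
  rw [R.ord_succ, List.insertIdx_eq_take_append_cons_drop _ _ ((R.pos_le n).trans_eq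
    (R.length_ord n).symm)]

lemma mem_ord {i N : ℕ} (hi : i < N) : i ∈ R.ord N := by
  induction N with
  | zero => omega
  | succ n ih =>
    rw [R.ord_succ_eq_insertIdx, List.mem_insertIdx ((R.pos_le n).trans_eq (R.length_ord n).symm)]
    rcases (Nat.lt_succ_iff_lt_or_eq.mp hi) with h | rfl
    · exact Or.inr (ih h)
    · exact Or.inl rfl

lemma card_le_of_moved (hα0 : 0 < α) (hα1 : α ≤ 1)
    (hdisj : ∀ g g', g ≠ g' → Disjoint (A g) (A g')) (hcover : (⋃ g, A g) = Set.univ)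
    {n q : ℕ} (hpq : R.pos n < q) (hqn : q ≤ n) {s T : Finset ℕ}
    (hv : ValidSubR A α L ((R.ord n).take q) n s T) :
    T.card ≤ R.mstar ((R.ord n).getD (q - 1) 0) := by
  obtain ⟨m, hm⟩ := exists_isMchkR (L := L) hα0 hα1 hdisj hcover ((R.ord n).take q) n
  refine le_trans ?_ (R.moved n q hpq hqn m hm)
  rcases hm with ⟨hnone, -⟩ | ⟨-, hmax⟩
  · exact absurd ⟨s, T, hv⟩ hnone
  · exact hmax s T hv

theorem card_le_mstar (hα0 : 0 < α) (hα1 : α ≤ 1)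
    (hdisj : ∀ g g', g ≠ g' → Disjoint (A g) (A g')) (hcover : (⋃ g, A g) = Set.univ)
    (N q k : ℕ) (hk : (R.ord N)[q]? = some k) {s T : Finset ℕ}
    (hv : ValidSubR A α L ((R.ord N).take q) k s T) : T.card ≤ R.mstar k := by
  induction N generalizing q k with
  | zero => simp [R.ord_zero] at hk
  | succ n ih =>
    have hp : R.pos n ≤ (R.ord n).length := (R.pos_le n).trans_eq (R.length_ord n).symm
    rw [R.ord_succ_eq_insertIdx] at hk hv
    rcases lt_trichotomy q (R.pos n) with hq | rfl | hq
    · rw [List.getElem?_insertIdx_of_lt hq] at hk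
      rw [List.take_insertIdx_eq_take_of_le _ _ _ _ hq.le] at hv
      exact ih q k hk hv
    · rw [List.getElem?_insertIdx_self, if_pos hp, Option.some_inj] at hk
      subst hk
      rw [List.take_insertIdx_eq_take_of_le _ _ _ _ le_rfl] at hv
      rcases R.wit_spec n with ⟨hnone, -⟩ | ⟨-, -, hmax⟩
      · exact absurd ⟨s, T, hv⟩ hnone
      · exact hmax s T hv
    · rw [List.getElem?_insertIdx_of_gt hq] at hk
      rw [List.take_insertIdx_of_lt _ _ hq] at hv
      have hmem : ∀ k', k' ∈ ((R.ord n).take (q - 1)).insertIdx (R.pos n) n ↔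
          k' = n ∨ k' ∈ (R.ord n).take (q - 1) :=
        fun k' => List.mem_insertIdx (by simp only [List.length_take]; omega)
      -- the while loop moved `n` past `k`, so witnesses involving `n` are bounded by `m*(k)`;
      -- witnesses avoiding `n` live in `k`'s prefix from the previous step
      by_cases hns : n ∈ s
      · have hkq : k ∈ (R.ord n).take q :=
          List.mem_of_getElem? (i := q - 1) (by rw [List.getElem?_take_of_lt (by omega), hk])
        have hqn : q ≤ n := by
          have := (List.getElem?_eq_some_iff.mp hk).1
          rw [R.length_ord] at this
          omega
        have := R.card_le_of_moved hα0 hα1 hdisj hcover hq hqn <|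
          hv.of_mem_prefix hns fun k' _ hk' => by
            rcases hk' with rfl | hk'
            · exact Or.inr hkq
            · exact (hmem k').mp hk' |>.imp_right
                fun h => List.take_subset_take_left _ (by omega) h
        rwa [List.getD_eq_getElem?_getD, hk, Option.getD_some] at this
      · refine ih (q - 1) k hk (hv.of_mem_prefix hv.1 fun k' hk's hk' => ?_)
        rcases hk' with rfl | hk'
        · exact Or.inl rfl
        · exact ((hmem k').mp hk').resolve_left (fun h => hns (h ▸ hk's)) |> Or.inr

end Proc3Run

end Procedure

section Generation

variable {K : ℕ} {A : Fin K → Set ℕ} {α : ℝ} {L : ℕ → Set ℕ}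

theorem Proc3Run.not_suffersScarcity (R : Proc3Run A α L) (hα0 : 0 < α) (hα1 : α ≤ 1)
    (hdisj : ∀ g g', g ≠ g' → Disjoint (A g) (A g')) (hcover : (⋃ g, A g) = Set.univ)
    {I S : Finset ℕ} (hI : I.Nonempty) (hsub : ∀ i ∈ I, (↑S : Set ℕ) ⊆ L i)
    (hlt : ∀ i ∈ I, R.mstar i < S.card) : ¬ SuffersScarcity A α L I S := by
  intro hsc
  set ord := R.ord (I.sup id + 1)
  have hmem : ∀ i ∈ I, i ∈ ord := fun i hi =>
    R.mem_ord (Nat.lt_succ_of_le (Finset.le_sup (f := id) hi))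
  -- the member of `I` placed last in the ordering has all the others in its prefix
  obtain ⟨last, hlast, hmax⟩ := I.exists_max_image (ord.idxOf ·) hI
  have hv : ValidSubR A α L (ord.take (ord.idxOf last)) last I S := by
    refine ⟨hlast, fun k hk => ?_, hsub, hsc⟩
    rcases eq_or_ne k last with rfl | hne
    · exact Or.inl rfl
    · refine Or.inr ((List.mem_take_iff_idxOf_lt (hmem k hk)).mpr ((hmax k hk).lt_of_ne ?_))
      exact fun h => hne ((List.idxOf_inj (hmem k hk)).mp h)
  have := R.card_le_mstar hα0 hα1 hdisj hcover _ _ _ (List.getElem?_idxOf (hmem last hlast)) hv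
  exact (hlt last hlast).not_ge this

lemma card_scarceGroups_lt (hdisj : ∀ g g', g ≠ g' → Disjoint (A g) (A g'))
    (hcover : (⋃ g, A g) = Set.univ) {C S : Finset ℕ} (hS : S.Nonempty)
    (hns : ¬ SuffersScarcity A α L C S) : (scarceGroups A L C S).card < K := by
  refine (Finset.card_le_univ _).trans_eq (Fintype.card_fin K) |>.lt_of_ne
    fun hK => hns (Or.inr ?_)
  rw [Finset.eq_univ_of_card _ (hK.trans (Fintype.card_fin K).symm),
    sum_empA_eq_one hdisj hcover hS, Finset.card_univ, Fintype.card_fin, sub_self, mul_zero]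
  exact one_pos

theorem exists_representative_dist (hdisj : ∀ g g', g ≠ g' → Disjoint (A g) (A g'))
    (hcover : (⋃ g, A g) = Set.univ) {C S : Finset ℕ} (hS : S.Nonempty)
    (hns : ¬ SuffersScarcity A α L C S) :
    ∃ p, IsDist p ∧ (∀ g, |empA A S g - prMass p (A g)| ≤ α) ∧
      ∀ i ∈ C, prMass p (L i \ ↑S) = 1 := by
  set B := scarceGroups A L C S
  have hBK : (0 : ℝ) < K - B.card :=
    sub_pos.mpr (by exact_mod_cast card_scarceGroups_lt hdisj hcover hS hns)
  obtain ⟨hscarce, hsumB⟩ :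
      (∀ g ∈ B, empA A S g ≤ α) ∧ ∑ g ∈ B, empA A S g ≤ α * (K - B.card) := by
    simpa only [SuffersScarcity, not_or, not_exists, not_and, not_lt] using hns
  have hfresh : ∀ g ∉ B, (A g ∩ ((⋂ i ∈ C, L i) \ ↑S)).Nonempty := fun g hg =>
    Set.nonempty_iff_ne_empty.mpr fun h => hg (Finset.mem_filter.mpr ⟨Finset.mem_univ g, h⟩)
  choose! y hy using hfresh
  set δ := (∑ g ∈ B, empA A S g) / (K - B.card)
  have hδ0 : 0 ≤ δ := div_nonneg (Finset.sum_nonneg fun g _ => empA_nonneg A S g) hBK.le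
  have hδα : δ ≤ α := (div_le_iff₀ hBK).mpr hsumB
  have hsum : ∑ g ∈ Bᶜ, (empA A S g + δ) = 1 := by
    have hcompl := Finset.sum_compl_add_sum B (empA A S)
    rw [sum_empA_eq_one hdisj hcover hS] at hcompl
    rw [Finset.sum_add_distrib, Finset.sum_const, nsmul_eq_mul, Finset.card_compl,
      Fintype.card_fin, Nat.cast_sub (card_scarceGroups_lt hdisj hcover hS hns).le,
      mul_div_cancel₀ _ hBK.ne']
    linarith
  refine ⟨sumDirac Bᶜ y fun g => empA A S g + δ,
    isDist_sumDirac _ _ _ (fun g _ => add_nonneg (empA_nonneg A S g) hδ0) hsum, fun g => ?_,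
    fun i hi => ?_⟩
  · rw [prMass_sumDirac_group hdisj _ _ _ fun g hg => (hy g (Finset.mem_compl.mp hg)).1]
    by_cases hg : g ∈ B
    · rw [if_neg (Finset.notMem_compl.mpr hg), sub_zero, abs_of_nonneg (empA_nonneg A S g)]
      exact hscarce g hg
    · rw [if_pos (Finset.mem_compl.mpr hg), sub_add_cancel_left, abs_neg, abs_of_nonneg hδ0]
      exact hδα
  · rw [prMass_sumDirac, ← hsum]
    refine Finset.sum_congr rfl fun g hg => if_pos ?_
    obtain ⟨-, hyC, hyS⟩ := hy g (Finset.mem_compl.mp hg)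
    exact ⟨Set.mem_iInter₂.mp hyC i hi, hyS⟩

lemma exists_isDist_prMass_eq_empA (S : Finset ℕ) :
    ∃ p, IsDist p ∧ (S.Nonempty → ∀ g, prMass p (A g) = empA A S g) := by
  rcases S.eq_empty_or_nonempty with rfl | hS
  · exact ⟨sumDirac {0} id fun _ => 1, isDist_sumDirac _ _ _ (by simp) (by simp), by simp⟩
  have hS0 : (S.card : ℝ) ≠ 0 := by exact_mod_cast hS.card_pos.ne'
  refine ⟨sumDirac S id fun _ => (S.card : ℝ)⁻¹,
    isDist_sumDirac _ _ _ (fun _ _ => by positivity) ?_, fun _ => prMass_sumDirac_uniform S⟩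
  rw [Finset.sum_const, nsmul_eq_mul, mul_inv_cancel₀ hS0]

end Generation

lemma Sfin_nonempty (x : ℕ → ℕ) {t : ℕ} (ht : 1 ≤ t) : (Sfin x t).Nonempty :=
  ⟨x 0, List.mem_toFinset.mpr (List.mem_map.mpr ⟨0, List.mem_range.mpr ht, rfl⟩)⟩

lemma IsEnumOf.coe_Sfin_subset {x : ℕ → ℕ} {Lang : Set ℕ} (hx : IsEnumOf x Lang) (t : ℕ) :
    (↑(Sfin x t) : Set ℕ) ⊆ Lang := fun _ ha => by
  obtain ⟨j, -, rfl⟩ := List.mem_map.mp (List.mem_toFinset.mp ha)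
  exact hx.1 j

theorem exists_repNonUniformGen_of_forall_finset {K : ℕ} {A : Fin K → Set ℕ} {α : ℝ}
    {L : ℕ → Set ℕ} {tG : ℕ → ℕ}
    (h : ∀ S : Finset ℕ, ∃ p, IsDist p ∧
      (S.Nonempty → ∀ g, |empA A S g - prMass p (A g)| ≤ α) ∧
      ∀ i, (↑S : Set ℕ) ⊆ L i → tG i ≤ S.card → prMass p (L i \ ↑S) = 1) :
    ∃ G, RepNonUniformGen A α G L tG := by
  choose p hdist hrep hsupp using h
  exact ⟨fun inp => p inp.toFinset, fun inp => hdist _, fun i x hx =>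
    ⟨fun t ht => hrep _ (Sfin_nonempty x ht),
      fun t _ htime => hsupp _ i (hx.coe_Sfin_subset t) htime⟩⟩

lemma lt_apply_of_sInf_le {f : ℕ → ℕ} (hf : Monotone f)
    (hftop : Filter.Tendsto f Filter.atTop Filter.atTop) {i n : ℕ}
    (h : sInf {j : ℕ | i + 1 ≤ f j} ≤ n) : i < f n :=
  have hmem : i + 1 ≤ f (sInf {j : ℕ | i + 1 ≤ f j}) :=
    Nat.sInf_mem (hftop.eventually_ge_atTop (i + 1)).exists
  Nat.lt_of_succ_le (hmem.trans (hf h))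

theorem stmt_18_general {K : ℕ} (A : Fin K → Set ℕ) (α : ℝ) (hα0 : 0 < α) (hα1 : α ≤ 1)
    (hdisj : ∀ g g', g ≠ g' → Disjoint (A g) (A g')) (hcover : (⋃ g, A g) = Set.univ)
    (L : ℕ → Set ℕ) (R : Proc3Run A α L)
    (f : ℕ → ℕ) (hf : Monotone f)
    (hftop : Filter.Tendsto f Filter.atTop Filter.atTop) :
    ∃ (G : List ℕ → ℕ → ℝ) (tG : ℕ → ℕ), RepNonUniformGen A α G L tG ∧
      ∀ i, tG i ≤ max (sInf {j : ℕ | i + 1 ≤ f j}) (R.mstar i + 1) := by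
  set tG : ℕ → ℕ := fun i => max (sInf {j : ℕ | i + 1 ≤ f j}) (R.mstar i + 1)
  refine (exists_repNonUniformGen_of_forall_finset fun S => ?_).imp
    fun G hG => ⟨tG, hG, fun i => le_rfl⟩
  set I := (Finset.range (f S.card)).filter fun i => (↑S : Set ℕ) ⊆ L i ∧ tG i ≤ S.card
  have hI : ∀ i, (↑S : Set ℕ) ⊆ L i → tG i ≤ S.card → i ∈ I := fun i hsub htime =>
    Finset.mem_filter.mpr ⟨Finset.mem_range.mpr
      (lt_apply_of_sInf_le hf hftop ((le_max_left _ _).trans htime)), hsub, htime⟩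
  have hmstar : ∀ i ∈ I, R.mstar i < S.card := fun i hi =>
    Nat.lt_of_succ_le ((le_max_right _ _).trans (Finset.mem_filter.mp hi).2.2)
  by_cases hIne : I.Nonempty
  · obtain ⟨i, hi⟩ := hIne
    have hS : S.Nonempty := Finset.card_pos.mp (Nat.zero_lt_of_lt (hmstar i hi))
    obtain ⟨p, hp, hrep, hsupp⟩ := exists_representative_dist hdisj hcover hS
      (R.not_suffersScarcity hα0 hα1 hdisj hcover ⟨i, hi⟩
        (fun i hi => (Finset.mem_filter.mp hi).2.1) hmstar)
    exact ⟨p, hp, fun _ => hrep, fun i hsub htime => hsupp i (hI i hsub htime)⟩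
  · obtain ⟨p, hp, hemp⟩ := exists_isDist_prMass_eq_empA (A := A) S
    refine ⟨p, hp, fun hS g => ?_, fun i hsub htime => absurd ⟨i, hI i hsub htime⟩ hIne⟩
    rw [hemp hS g, sub_self, abs_zero]
    exact hα0.le

/-- Theorem 5.5: representative generation times. Fix `α ∈ (0, 1]`
and a finite partition `A` of the universe into `K` groups. For any non-decreasing
`f : ℕ → ℕ` tending to infinity, there is a representative generating algorithm that
generates non-uniformly with `α`-representation from `L` with times
`t*_α(L_i) ≤ max (g i) (m*_α(L_i) + 1)`, where `g i` is the smallest `j` with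
`f j ≥ i` (0-based: `f j ≥ i + 1`). -/
theorem stmt_18 {K : ℕ} (A : Fin K → Set ℕ) (α : ℝ) (hα0 : 0 < α) (hα1 : α ≤ 1)
    (hdisj : ∀ g g', g ≠ g' → Disjoint (A g) (A g')) (hcover : (⋃ g, A g) = Set.univ)
    (L : ℕ → Set ℕ) (hL : ∀ i, (L i).Infinite) (R : Proc3Run A α L)
    (f : ℕ → ℕ) (hf : Monotone f)
    (hftop : Filter.Tendsto f Filter.atTop Filter.atTop) :
    ∃ (G : List ℕ → ℕ → ℝ) (tG : ℕ → ℕ), RepNonUniformGen A α G L tG ∧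
      ∀ i, tG i ≤ max (sInf {j : ℕ | i + 1 ≤ f j}) (R.mstar i + 1) :=
  stmt_18_general A α hα0 hα1 hdisj hcover L R f hf hftop
end
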